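/- arXiv:1302.4013 — 12 statements merged into one kernel-verified Lean document; each statement's English description precedes it below -/
import Mathlib

section
/- Let (X,d) be a complete metric space and T : X → X. Suppose there exist α ∈ [0,1) and λ ≥ 0 such that d(Tx,Ty) ≤ α·d(x,y) + λ·d(Tx,y) for all x,y ∈ X. Then T is a strong Picard operator (modulo d): for each x ∈ X the iterative sequence (Tⁿx; n ≥ 0) converges in (X,d) and its limit is a fixed point of T. -/
open Filter Topology

/-- **Berinde's theorem (Theorem 1).**
If `(X,d)` is a complete metric space and `T : X → X` is a weak `(α,λ)`-contraction,
i.e. `d(Tx,Ty) ≤ α·d(x,y) + λ·d(Tx,y)` for all `x,y`, where `α ∈ [0,1)` and `λ ≥ 0`,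
then `T` is a strong Picard operator: for each `x`, the iterates `Tⁿx` converge
and the limit is a fixed point of `T`. -/
theorem weak_contraction_strong_picard {X : Type*} [MetricSpace X] [CompleteSpace X]
    (T : X → X) (α lam : ℝ) (hα0 : 0 ≤ α) (hα1 : α < 1) (hlam : 0 ≤ lam)
    (hcontr : ∀ x y : X, dist (T x) (T y) ≤ α * dist x y + lam * dist (T x) y) :
    ∀ x : X, ∃ z : X,
      Tendsto (fun n => T^[n] x) atTop (𝓝 z) ∧ z = T z := by
  intro x
  set f : ℕ → X := fun n => T^[n] x with hf
  have hstep : ∀ y : X, dist (T y) (T (T y)) ≤ α * dist y (T y) := by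
    intro y
    have := hcontr y (T y)
    simpa [dist_comm] using this
  have hgeom : ∀ n, dist (f n) (f (n + 1)) ≤ dist x (T x) * α ^ n := by
    intro n
    induction n with
    | zero => simp [hf]
    | succ n ih =>
      have h1 : f (n + 1) = T (f n) := by
        simp [hf, Function.iterate_succ_apply']
      have h2 : f (n + 2) = T (T (f n)) := by
        simp [hf, Function.iterate_succ_apply']
      calc dist (f (n + 1)) (f (n + 2)) = dist (T (f n)) (T (T (f n))) := by
            rw [h1, h2]
        _ ≤ α * dist (f n) (T (f n)) := hstep (f n)
        _ = α * dist (f n) (f (n + 1)) := by rw [h1]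
        _ ≤ α * (dist x (T x) * α ^ n) := by
            exact mul_le_mul_of_nonneg_left ih hα0
        _ = dist x (T x) * α ^ (n + 1) := by ring
  have hcauchy : CauchySeq f :=
    cauchySeq_of_le_geometric α (dist x (T x)) hα1 hgeom
  obtain ⟨z, hz⟩ := cauchySeq_tendsto_of_complete hcauchy
  refine ⟨z, hz, ?_⟩
  -- show z = T z
  have hTz : Tendsto (fun n => f (n + 1)) atTop (𝓝 z) :=
    hz.comp (tendsto_add_atTop_nat 1)
  have hbound : ∀ n, dist (f (n + 1)) (T z) ≤ α * dist (f n) z + lam * dist (f (n + 1)) z := by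
    intro n
    have h1 : f (n + 1) = T (f n) := by
      simp [hf, Function.iterate_succ_apply']
    calc dist (f (n + 1)) (T z) = dist (T (f n)) (T z) := by rw [h1]
      _ ≤ α * dist (f n) z + lam * dist (T (f n)) z := hcontr (f n) z
      _ = α * dist (f n) z + lam * dist (f (n + 1)) z := by rw [h1]
  have hlim : Tendsto (fun n => dist (f (n + 1)) (T z)) atTop (𝓝 (dist z (T z))) :=
    (Tendsto.dist hTz tendsto_const_nhds)
  have hlim2 : Tendsto (fun n => α * dist (f n) z + lam * dist (f (n + 1)) z) atTop (𝓝 0) := by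
    have h1 : Tendsto (fun n => dist (f n) z) atTop (𝓝 0) :=
      tendsto_iff_dist_tendsto_zero.mp hz
    have h2 : Tendsto (fun n => dist (f (n + 1)) z) atTop (𝓝 0) :=
      tendsto_iff_dist_tendsto_zero.mp hTz
    have := ((h1.const_mul α).add (h2.const_mul lam))
    simpa using this
  have : dist z (T z) ≤ 0 :=
    le_of_tendsto_of_tendsto' hlim hlim2 hbound
  have : dist z (T z) = 0 := le_antisymm this dist_nonneg
  exact dist_eq_zero.mp this
end

section
/- Let (X,d) be a metric space, φ : [0,∞) → [0,∞) an altering function, e(x,y) = φ(d(x,y)), and M(x,y) = max{e(x,y), (1/2)[e(x,Tx)+e(y,Ty)], min{e(x,Ty), e(Tx,y)}}. Let ψ : [0,∞) → [0,∞) satisfy ψ(s) < 1 for all s > 0, and suppose T : X → X satisfies e(Tx,Ty) ≤ ψ(d(x,y))·M(x,y) for all x,y ∈ X with x ≠ y. Fix x₀ ∈ X and put xₙ = Tⁿx₀, and assume ρₙ := d(xₙ,xₙ₊₁) > 0 for all n. Then, with σₙ := e(xₙ,xₙ₊₁), one has σₙ₊₁/σₙ ≤ ψ(ρₙ) < 1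 for all n; in particular both (σₙ) and (ρₙ) are strictly decreasing sequences of positive reals. -/
open Filter Topology

/-- `φ : [0,∞) → [0,∞)` is an *altering function*: continuous, increasing,
and reflexive sufficient (`φ t = 0` iff `t = 0`); it takes nonnegative values
on `[0,∞)`. (We model it as a real function restricted to `Set.Ici 0`.) -/
def IsAltering (φ : ℝ → ℝ) : Prop :=
  ContinuousOn φ (Set.Ici 0) ∧ MonotoneOn φ (Set.Ici 0) ∧
    (∀ t, 0 ≤ t → 0 ≤ φ t) ∧ (∀ t, 0 ≤ t → (φ t = 0 ↔ t = 0))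

/-- The altering metric `e(x,y) = φ(d(x,y))`. -/
noncomputable def eAlt {X : Type*} [MetricSpace X] (φ : ℝ → ℝ) (x y : X) : ℝ :=
  φ (dist x y)

/-- `M(x,y) = max{e(x,y), (1/2)[e(x,Tx)+e(y,Ty)], min{e(x,Ty), e(Tx,y)}}`. -/
noncomputable def MAlt {X : Type*} [MetricSpace X] (φ : ℝ → ℝ) (T : X → X) (x y : X) : ℝ :=
  max (max (eAlt φ x y) ((eAlt φ x (T x) + eAlt φ y (T y)) / 2))
    (min (eAlt φ x (T y)) (eAlt φ (T x) y))

/-- `ψ` is strictly subunitary on `(0,∞)`: `ψ s < 1` for all `s > 0`. -/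
def StrictlySubunitary (ψ : ℝ → ℝ) : Prop := ∀ s, 0 < s → ψ s < 1

/-- `ψ` is right Boyd–Wong on `(0,∞)`: `limsup_{t→s+} ψ(t) < 1` for all `s > 0`. -/
def RightBoydWong (ψ : ℝ → ℝ) : Prop := ∀ s, 0 < s → limsup ψ (𝓝[>] s) < 1

/-- **Step I of the main theorem.** If `T` is `(d,e;M;ψ)`-contractive with `ψ`
strictly subunitary on `(0,∞)`, and the orbit `xₙ = Tⁿx₀` satisfies
`ρₙ := d(xₙ,xₙ₊₁) > 0` for all `n`, then with `σₙ := e(xₙ,xₙ₊₁)` we have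
`σₙ₊₁/σₙ ≤ ψ(ρₙ) < 1` for all `n`; in particular `(σₙ)` and `(ρₙ)` are
strictly decreasing sequences of positive reals. -/
theorem orbit_distances_strictly_decreasing {X : Type*} [MetricSpace X]
    (T : X → X) (φ ψ : ℝ → ℝ) (hφ : IsAltering φ)
    (hψnonneg : ∀ s, 0 ≤ s → 0 ≤ ψ s) (hψ : StrictlySubunitary ψ)
    (hcontr : ∀ x y : X, x ≠ y → eAlt φ (T x) (T y) ≤ ψ (dist x y) * MAlt φ T x y)
    (x₀ : X)
    (hρ : ∀ n : ℕ, 0 < dist (T^[n] x₀) (T^[n + 1] x₀)) :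
    (∀ n : ℕ, eAlt φ (T^[n + 1] x₀) (T^[n + 2] x₀) / eAlt φ (T^[n] x₀) (T^[n + 1] x₀)
        ≤ ψ (dist (T^[n] x₀) (T^[n + 1] x₀)) ∧
      ψ (dist (T^[n] x₀) (T^[n + 1] x₀)) < 1) ∧
    StrictAnti (fun n : ℕ => eAlt φ (T^[n] x₀) (T^[n + 1] x₀)) ∧
    StrictAnti (fun n : ℕ => dist (T^[n] x₀) (T^[n + 1] x₀)) ∧
    (∀ n : ℕ, 0 < eAlt φ (T^[n] x₀) (T^[n + 1] x₀)) := by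
  obtain ⟨hcont, hmono, hnn, hzero⟩ := hφ
  have hφ0 : φ 0 = 0 := (hzero 0 le_rfl).mpr rfl
  have hσpos : ∀ n : ℕ, 0 < eAlt φ (T^[n] x₀) (T^[n+1] x₀) := by
    intro n
    have h1 : 0 ≤ φ (dist (T^[n] x₀) (T^[n+1] x₀)) := hnn _ dist_nonneg
    have h2 : φ (dist (T^[n] x₀) (T^[n+1] x₀)) ≠ 0 := fun h =>
      absurd ((hzero _ dist_nonneg).mp h) (ne_of_gt (hρ n))
    exact lt_of_le_of_ne h1 (Ne.symm h2)
  have key : ∀ n : ℕ, eAlt φ (T^[n+1] x₀) (T^[n+2] x₀)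
      ≤ ψ (dist (T^[n] x₀) (T^[n+1] x₀)) * eAlt φ (T^[n] x₀) (T^[n+1] x₀) := by
    intro n
    set a := T^[n] x₀ with ha
    have hb : T^[n+1] x₀ = T a := Function.iterate_succ_apply' T n x₀
    have hc : T^[n+2] x₀ = T (T a) := by
      rw [show n+2 = (n+1)+1 from rfl, Function.iterate_succ_apply', hb]
    set σn := eAlt φ (T^[n] x₀) (T^[n+1] x₀) with hσn
    set σn1 := eAlt φ (T^[n+1] x₀) (T^[n+2] x₀) with hσn1
    have hσn' : σn = eAlt φ a (T a) := by rw [hσn, hb]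
    have hσn1' : σn1 = eAlt φ (T a) (T (T a)) := by rw [hσn1, hb, hc]
    have hne : a ≠ T a := fun h => absurd (by rw [hb, ← h, dist_self]) (ne_of_gt (hρ n))
    have h0 := hcontr a (T a) hne
    have hdist : dist a (T a) = dist (T^[n] x₀) (T^[n+1] x₀) := by rw [hb]
    have hψ0 : 0 ≤ ψ (dist a (T a)) := hψnonneg _ dist_nonneg
    have hM : MAlt φ T a (T a) ≤ max σn σn1 := by
      unfold MAlt
      have hz : eAlt φ (T a) (T a) = 0 := by simp [eAlt, dist_self, hφ0]
      apply max_le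
      · apply max_le
        · rw [hσn']; exact le_max_left _ _
        · rw [hσn', hσn1']
          have h1 : eAlt φ a (T a) ≤ max (eAlt φ a (T a)) (eAlt φ (T a) (T (T a))) := le_max_left _ _
          have h2 : eAlt φ (T a) (T (T a)) ≤ max (eAlt φ a (T a)) (eAlt φ (T a) (T (T a))) := le_max_right _ _
          linarith
      · calc min (eAlt φ a (T (T a))) (eAlt φ (T a) (T a)) ≤ eAlt φ (T a) (T a) := min_le_right _ _
          _ = 0 := hz
          _ ≤ max σn σn1 := le_max_of_le_left (le_of_lt (hσpos n))
    have hchain : σn1 ≤ ψ (dist a (T a)) * max σn σn1 := by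
      calc σn1 = eAlt φ (T a) (T (T a)) := hσn1'
        _ ≤ ψ (dist a (T a)) * MAlt φ T a (T a) := h0
        _ ≤ ψ (dist a (T a)) * max σn σn1 := mul_le_mul_of_nonneg_left hM hψ0
    rw [hdist] at hchain
    rcases le_or_gt σn1 σn with h | h
    · rw [max_eq_left h] at hchain
      rw [← hdist]
      rw [hdist]
      exact hchain
    · exfalso
      rw [max_eq_right h.le] at hchain
      have hψlt : ψ (dist (T^[n] x₀) (T^[n+1] x₀)) < 1 := hψ _ (hρ n)
      have hpos : 0 < σn1 := hσpos (n+1)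
      nlinarith
  have hψlt : ∀ n : ℕ, ψ (dist (T^[n] x₀) (T^[n+1] x₀)) < 1 := fun n => hψ _ (hρ n)
  have hσanti : ∀ n : ℕ, eAlt φ (T^[n+1] x₀) (T^[n+2] x₀) < eAlt φ (T^[n] x₀) (T^[n+1] x₀) := by
    intro n
    calc eAlt φ (T^[n+1] x₀) (T^[n+2] x₀)
        ≤ ψ (dist (T^[n] x₀) (T^[n+1] x₀)) * eAlt φ (T^[n] x₀) (T^[n+1] x₀) := key n
      _ < 1 * eAlt φ (T^[n] x₀) (T^[n+1] x₀) :=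
          mul_lt_mul_of_pos_right (hψlt n) (hσpos n)
      _ = eAlt φ (T^[n] x₀) (T^[n+1] x₀) := one_mul _
  refine ⟨fun n => ⟨(div_le_iff₀ (hσpos n)).mpr (key n), hψlt n⟩,
    strictAnti_nat_of_succ_lt (fun n => hσanti n),
    strictAnti_nat_of_succ_lt (fun n => ?_), hσpos⟩
  by_contra h
  push_neg at h
  have := hmono (Set.mem_Ici.mpr dist_nonneg) (Set.mem_Ici.mpr dist_nonneg) h
  exact absurd (hσanti n) (not_lt.mpr this)
end

section
/- Let (X,d) be a metric space, φ : [0,∞) → [0,∞) an altering function, e(x,y) = φ(d(x,y)), and M(x,y) = max{e(x,y), (1/2)[e(x,Tx)+e(y,Ty)], min{e(x,Ty), e(Tx,y)}}. Let ψ : [0,∞) → [0,∞) be strictly subunitary on (0,∞) and right Boyd-Wong on (0,∞), and suppose T : X → X satisfies e(Tx,Ty) ≤ ψ(d(x,y))·M(x,y) for all x,y ∈ X with x ≠ y. Then for every x₀ ∈ X the iterative sequence (xₙ = Tⁿx₀; n ≥ 0) satisfies d(xₙ,xₙ₊₁) → 0 as n → ∞. -/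
open Filter Topology

/-- **Step I conclusion.** If `T` is `(d,e;M;ψ)`-contractive with `ψ` strictly
subunitary and right Boyd–Wong on `(0,∞)`, then every orbit `xₙ = Tⁿx₀` is
`d`-semi-Cauchy: `d(xₙ,xₙ₊₁) → 0` as `n → ∞`. -/
theorem orbit_semiCauchy {X : Type*} [MetricSpace X]
    (T : X → X) (φ ψ : ℝ → ℝ) (hφ : IsAltering φ)
    (hψnonneg : ∀ s, 0 ≤ s → 0 ≤ ψ s)
    (hψsub : StrictlySubunitary ψ) (hψbw : RightBoydWong ψ)
    (hcontr : ∀ x y : X, x ≠ y → eAlt φ (T x) (T y) ≤ ψ (dist x y) * MAlt φ T x y)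
    (x₀ : X) :
    Tendsto (fun n : ℕ => dist (T^[n] x₀) (T^[n + 1] x₀)) atTop (𝓝 0) := by
  obtain ⟨hφc, hφm, hφnn, hφ0⟩ := hφ
  set x : ℕ → X := fun n => T^[n] x₀ with hx
  have hφzero : φ 0 = 0 := (hφ0 0 le_rfl).mpr rfl
  by_cases hfix : ∃ n, x n = x (n + 1)
  · obtain ⟨n, hn⟩ := hfix
    have hconst : ∀ m, n ≤ m → x m = x n := by
      intro m hm
      induction m with
      | zero => exact congrArg x (Nat.le_zero.mp hm).symm
      | succ k ih =>
        rcases Nat.lt_or_ge n (k + 1) with h | h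
        · have hk := ih (Nat.lt_succ_iff.mp h)
          have h1 : x (k + 1) = x (n + 1) := by
            simp only [hx, Function.iterate_succ_apply']
            exact congrArg T hk
          rw [h1, ← hn]
        · exact congrArg x (le_antisymm h hm)
    apply Tendsto.congr' _ (tendsto_const_nhds (x := (0 : ℝ)))
    filter_upwards [eventually_ge_atTop n] with m hm
    have h1 : x m = x n := hconst m hm
    have h2 : x (m + 1) = x n := hconst (m + 1) (hm.trans (Nat.le_succ m))
    show (0 : ℝ) = dist (x m) (x (m + 1))
    rw [h1, h2, dist_self]
  · push_neg at hfix
    set ρ : ℕ → ℝ := fun n => dist (x n) (x (n + 1)) with hρ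
    set E : ℕ → ℝ := fun n => φ (ρ n) with hE
    have hρnn : ∀ n, 0 ≤ ρ n := fun n => dist_nonneg
    have hρpos : ∀ n, 0 < ρ n := fun n => dist_pos.mpr (hfix n)
    have hEpos : ∀ n, 0 < E n := by
      intro n
      refine lt_of_le_of_ne (hφnn _ (hρnn n)) ?_
      intro h
      exact (hρpos n).ne' ((hφ0 _ (hρnn n)).mp h.symm)
    have hTx : ∀ n, T (x n) = x (n + 1) := fun n =>
      (Function.iterate_succ_apply' T n x₀).symm
    have hkey : ∀ n, E (n + 1) ≤ ψ (ρ n) * E n := by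
      intro n
      have hc := hcontr (x n) (x (n + 1)) (hfix n)
      simp only [MAlt, eAlt, hTx n, hTx (n + 1), dist_self, hφzero] at hc
      have hmin : min (φ (dist (x n) (x (n + 2)))) 0 = 0 :=
        min_eq_right (hφnn _ dist_nonneg)
      rw [hmin, max_eq_left (le_trans (hφnn _ dist_nonneg) (le_max_left _ _))] at hc
      rcases le_or_gt (E (n + 1)) (E n) with h | h
      · have hmax : max (φ (dist (x n) (x (n + 1))))
            ((φ (dist (x n) (x (n + 1))) + φ (dist (x (n + 1)) (x (n + 2)))) / 2)
            = E n := by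
          apply max_eq_left
          show (E n + E (n + 1)) / 2 ≤ E n
          linarith
        rw [hmax] at hc
        exact hc
      · exfalso
        have hψlt : ψ (ρ n) < 1 := hψsub _ (hρpos n)
        have hmax : max (φ (dist (x n) (x (n + 1))))
            ((φ (dist (x n) (x (n + 1))) + φ (dist (x (n + 1)) (x (n + 2)))) / 2)
            = (E n + E (n + 1)) / 2 := by
          apply max_eq_right
          show E n ≤ (E n + E (n + 1)) / 2
          linarith
        rw [hmax] at hc
        have hA : (0 : ℝ) < (E n + E (n + 1)) / 2 := by
          have := hEpos n; have := hEpos (n + 1); linarith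
        have : E (n + 1) < (E n + E (n + 1)) / 2 :=
          lt_of_le_of_lt hc (by nlinarith)
        linarith
    have hElt : ∀ n, E (n + 1) < E n := by
      intro n
      calc E (n + 1) ≤ ψ (ρ n) * E n := hkey n
        _ < 1 * E n := mul_lt_mul_of_pos_right (hψsub _ (hρpos n)) (hEpos n)
        _ = E n := one_mul _
    have hρlt : ∀ n, ρ (n + 1) < ρ n := by
      intro n
      by_contra h
      push_neg at h
      exact absurd (hφm (Set.mem_Ici.mpr (hρnn n)) (Set.mem_Ici.mpr (hρnn (n + 1))) h)
        (not_le.mpr (hElt n))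
    have hanti : Antitone ρ := antitone_nat_of_succ_le fun n => (hρlt n).le
    have hbdd : BddBelow (Set.range ρ) := ⟨0, by rintro _ ⟨n, rfl⟩; exact hρnn n⟩
    set L : ℝ := ⨅ n, ρ n with hLdef
    have htend : Tendsto ρ atTop (𝓝 L) := tendsto_atTop_ciInf hanti hbdd
    have hL0 : 0 ≤ L := le_ciInf fun n => hρnn n
    rcases eq_or_lt_of_le hL0 with h | hLpos
    · exact h ▸ htend
    · exfalso
      have hρgtL : ∀ n, L < ρ n := fun n =>
        lt_of_le_of_lt (ciInf_le hbdd (n + 1)) (hρlt n)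
      have htend' : Tendsto ρ atTop (𝓝[>] L) :=
        tendsto_nhdsWithin_of_tendsto_nhds_of_eventually_within ρ htend
          (Eventually.of_forall hρgtL)
      obtain ⟨c, hc1, hc2⟩ := exists_between (hψbw L hLpos)
      have hcob : IsBoundedUnder (· ≤ ·) (𝓝[>] L) ψ := by
        refine ⟨1, ?_⟩
        rw [eventually_map]
        filter_upwards [self_mem_nhdsWithin] with t ht
        exact (hψsub t (hLpos.trans ht)).le
      have hev : ∀ᶠ t in 𝓝[>] L, ψ t < c := eventually_lt_of_limsup_lt hc1 hcob
      have heψ : ∀ᶠ n in atTop, ψ (ρ n) < c := htend'.eventually hev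
      have hEtend : Tendsto E atTop (𝓝 (φ L)) := by
        have hcw : ContinuousWithinAt φ (Set.Ici 0) L := hφc L (Set.mem_Ici.mpr hL0)
        refine hcw.tendsto.comp ?_
        rw [tendsto_nhdsWithin_iff]
        exact ⟨htend, Eventually.of_forall fun n => Set.mem_Ici.mpr (hρnn n)⟩
      have hφLpos : 0 < φ L := by
        refine lt_of_le_of_ne (hφnn _ hL0) ?_
        intro h
        exact hLpos.ne' ((hφ0 _ hL0).mp h.symm)
      have hEtend' : Tendsto (fun n => E (n + 1)) atTop (𝓝 (φ L)) :=
        hEtend.comp (tendsto_add_atTop_nat 1)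
      have hcE : Tendsto (fun n => c * E n) atTop (𝓝 (c * φ L)) :=
        hEtend.const_mul c
      have hle : φ L ≤ c * φ L := by
        refine le_of_tendsto_of_tendsto hEtend' hcE ?_
        filter_upwards [heψ] with n hn
        exact (hkey n).trans (mul_le_mul_of_nonneg_right hn.le (hEpos n).le)
      nlinarith
end

section
/- Let (X,d) be a metric space, φ : [0,∞) → [0,∞) an altering function, e(x,y) = φ(d(x,y)), and M(x,y) = max{e(x,y), (1/2)[e(x,Tx)+e(y,Ty)], min{e(x,Ty), e(Tx,y)}}. Let ψ : [0,∞) → [0,∞) be strictly subunitary on (0,∞) and right Boyd-Wong on (0,∞), and suppose T : X → X satisfies e(Tx,Ty) ≤ ψ(d(x,y))·M(x,y) for all x,y ∈ X with x ≠ y. Then for every x₀ ∈ X the iterative sequence (xₙ = Tⁿx₀; n ≥ 0) is d-Cauchy. -/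
open Filter Topology

set_option maxHeartbeats 1000000 in
/-- **Step II of the main theorem.** If `T` is `(d,e;M;ψ)`-contractive with `ψ`
strictly subunitary and right Boyd–Wong on `(0,∞)`, then every orbit
`xₙ = Tⁿx₀` is a `d`-Cauchy sequence. -/
theorem orbit_cauchy {X : Type*} [MetricSpace X]
    (T : X → X) (φ ψ : ℝ → ℝ) (hφ : IsAltering φ)
    (hψnonneg : ∀ s, 0 ≤ s → 0 ≤ ψ s)
    (hψsub : StrictlySubunitary ψ) (hψbw : RightBoydWong ψ)
    (hcontr : ∀ x y : X, x ≠ y → eAlt φ (T x) (T y) ≤ ψ (dist x y) * MAlt φ T x y)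
    (x₀ : X) :
    CauchySeq (fun n : ℕ => T^[n] x₀) := by
  classical
  obtain ⟨hφc, hφm, hφnn, hφ0iff⟩ := hφ
  set x : ℕ → X := fun n => T^[n] x₀ with hxdef
  have hxsucc : ∀ n, x (n + 1) = T (x n) := fun n => Function.iterate_succ_apply' T n x₀
  have hφ0 : φ 0 = 0 := (hφ0iff 0 le_rfl).mpr rfl
  have φmono : ∀ u v : ℝ, 0 ≤ u → u ≤ v → φ u ≤ φ v := fun u v hu huv =>
    hφm (Set.mem_Ici.mpr hu) (Set.mem_Ici.mpr (hu.trans huv)) huv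
  have φpos : ∀ u : ℝ, 0 < u → 0 < φ u := fun u hu =>
    lt_of_le_of_ne (hφnn u hu.le) (fun h => hu.ne' ((hφ0iff u hu.le).mp h.symm))
  by_cases hfix : ∃ n, x (n + 1) = x n
  · obtain ⟨N, hN⟩ := hfix
    have hconst : ∀ m, N ≤ m → x m = x N := by
      intro m hm
      induction m with
      | zero =>
        have : N = 0 := Nat.le_zero.mp hm
        rw [this]
      | succ k ih =>
        rcases Nat.lt_or_ge k N with h | h
        · have hNk : N = k + 1 := by omega
          rw [hNk]
        · rw [hxsucc k, ih h, ← hxsucc N, hN]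
    have htend : Filter.Tendsto x Filter.atTop (𝓝 (x N)) :=
      tendsto_const_nhds.congr' (Filter.eventually_atTop.2 ⟨N, fun m hm => (hconst m hm).symm⟩)
    exact htend.cauchySeq
  · push_neg at hfix
    set D : ℕ → ℝ := fun n => dist (x n) (x (n + 1)) with hDdef
    have hD0 : ∀ n, 0 < D n := fun n => dist_pos.mpr (fun h => hfix n h.symm)
    have hφD0 : ∀ n, 0 < φ (D n) := fun n => φpos _ (hD0 n)
    -- Step estimate
    have hstep : ∀ n, φ (D (n + 1)) ≤ ψ (D n) * φ (D n) := by
      intro n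
      have hne : x n ≠ x (n + 1) := fun h => hfix n h.symm
      have hc := hcontr (x n) (x (n + 1)) hne
      simp only [MAlt, eAlt, ← hxsucc] at hc
      rw [dist_self, hφ0, min_eq_right (hφnn _ dist_nonneg),
        max_eq_left (le_max_of_le_left (hφnn _ dist_nonneg))] at hc
      have hcD : φ (D (n + 1)) ≤ ψ (D n) *
          max (φ (D n)) ((φ (D n) + φ (D (n + 1))) / 2) := hc
      rcases le_or_gt (φ (D (n + 1))) (φ (D n)) with hab | hab
      · rwa [max_eq_left (by linarith)] at hcD
      · exfalso
        rw [max_eq_right (by linarith)] at hcD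
        have hψlt := hψsub (D n) (hD0 n)
        have hmid : 0 < (φ (D n) + φ (D (n + 1))) / 2 := by
          have := hφD0 n; linarith
        have := mul_lt_of_lt_one_left hmid hψlt
        linarith
    have hdec : ∀ n, D (n + 1) < D n := by
      intro n
      by_contra h
      push_neg at h
      have h1 : φ (D n) ≤ φ (D (n + 1)) := φmono _ _ (hD0 n).le h
      have h2 : ψ (D n) * φ (D n) < φ (D n) :=
        mul_lt_of_lt_one_left (hφD0 n) (hψsub (D n) (hD0 n))
      linarith [hstep n]
    have hanti : StrictAnti D := strictAnti_nat_of_succ_lt hdec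
    have hbdd : BddBelow (Set.range D) := ⟨0, by rintro y ⟨n, rfl⟩; exact (hD0 n).le⟩
    have hDtend : Filter.Tendsto D Filter.atTop (𝓝 (⨅ n, D n)) :=
      tendsto_atTop_ciInf hanti.antitone hbdd
    set δ := ⨅ n, D n with hδdef
    have hδle : ∀ n, δ ≤ D n := fun n => ciInf_le hbdd n
    have hδlt : ∀ n, δ < D n := fun n => lt_of_le_of_lt (hδle (n + 1)) (hdec n)
    have hδnn : 0 ≤ δ := le_ciInf fun n => (hD0 n).le
    have hδ0 : δ = 0 := by
      by_contra hδ
      have hδpos : 0 < δ := lt_of_le_of_ne hδnn (Ne.symm hδ)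
      have hbw := hψbw δ hδpos
      have hbound : Filter.IsBoundedUnder (· ≤ ·) (𝓝[>] δ) ψ :=
        ⟨1, Filter.eventually_map.mpr (by
          filter_upwards [self_mem_nhdsWithin] with t ht
          exact (hψsub t (hδpos.trans ht)).le)⟩
      set θ' := (Filter.limsup ψ (𝓝[>] δ) + 1) / 2 with hθ'def
      have hθ'1 : θ' < 1 := by rw [hθ'def]; linarith
      have hlt : Filter.limsup ψ (𝓝[>] δ) < θ' := by rw [hθ'def]; linarith
      have hev := Filter.eventually_lt_of_limsup_lt hlt hbound
      have hDmem : Filter.Tendsto D Filter.atTop (𝓝[>] δ) :=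
        tendsto_nhdsWithin_iff.mpr ⟨hDtend, Filter.Eventually.of_forall fun n => hδlt n⟩
      have hev2 : ∀ᶠ n in Filter.atTop, ψ (D n) < θ' := hDmem.eventually hev
      have hφDtend : Filter.Tendsto (fun n => φ (D n)) Filter.atTop (𝓝 (φ δ)) :=
        (hφc δ hδnn).tendsto.comp
          (tendsto_nhdsWithin_iff.mpr ⟨hDtend, Filter.Eventually.of_forall fun n => (hD0 n).le⟩)
      have hφDtend' : Filter.Tendsto (fun n => φ (D (n + 1))) Filter.atTop (𝓝 (φ δ)) :=
        hφDtend.comp (Filter.tendsto_add_atTop_nat 1)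
      have hle : φ δ ≤ θ' * φ δ := by
        refine le_of_tendsto_of_tendsto hφDtend' (hφDtend.const_mul θ') ?_
        filter_upwards [hev2] with n hn
        exact (hstep n).trans (mul_le_mul_of_nonneg_right hn.le (hφnn _ (hD0 n).le))
      have hφδpos : 0 < φ δ := φpos δ hδpos
      nlinarith
    have hDto0 : Filter.Tendsto D Filter.atTop (𝓝 0) := hδ0 ▸ hDtend
    -- Cauchy by contradiction
    by_contra hC
    rw [Metric.cauchySeq_iff] at hC
    push_neg at hC
    obtain ⟨ε, hε, hC⟩ := hC
    have hφεpos : 0 < φ ε := φpos ε hε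
    have hbw := hψbw ε hε
    have hbound : Filter.IsBoundedUnder (· ≤ ·) (𝓝[>] ε) ψ :=
      ⟨1, Filter.eventually_map.mpr (by
        filter_upwards [self_mem_nhdsWithin] with t ht
        exact (hψsub t (hε.trans ht)).le)⟩
    set θ' := (Filter.limsup ψ (𝓝[>] ε) + 1) / 2 with hθ'def
    have hθ'1 : θ' < 1 := by rw [hθ'def]; linarith
    have hlt : Filter.limsup ψ (𝓝[>] ε) < θ' := by rw [hθ'def]; linarith
    have hev := Filter.eventually_lt_of_limsup_lt hlt hbound
    rw [eventually_nhdsWithin_iff, Metric.eventually_nhds_iff] at hev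
    obtain ⟨η₁, hη₁, hev⟩ := hev
    set θ := max (max (ψ ε) θ') 0 with hθdef
    have hθ1 : θ < 1 := max_lt (max_lt (hψsub ε hε) hθ'1) one_pos
    have hθ0 : (0:ℝ) ≤ θ := le_max_right _ _
    have hθr : ∀ r : ℝ, ε ≤ r → r < ε + η₁ → ψ r ≤ θ := by
      intro r h1 h2
      rcases eq_or_lt_of_le h1 with h | h
      · rw [← h]; exact le_max_of_le_left (le_max_left _ _)
      · refine le_trans (hev ?_ h).le (le_max_of_le_left (le_max_right _ _))
        rw [Real.dist_eq, abs_of_nonneg (by linarith)]; linarith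
    set γ := (1 - θ) * φ ε / 2 with hγdef
    have hγpos : 0 < γ := div_pos (mul_pos (by linarith) hφεpos) two_pos
    obtain ⟨η₂, hη₂, hcont⟩ := (Metric.continuousWithinAt_iff).mp (hφc ε hε.le) γ hγpos
    set η := min ε (min η₁ (η₂ / 3)) with hηdef
    have hη : 0 < η := lt_min hε (lt_min hη₁ (by linarith))
    have hηε : η ≤ ε := min_le_left _ _
    have hηη₁ : η ≤ η₁ := (min_le_right _ _).trans (min_le_left _ _)
    have h3η : 3 * η ≤ η₂ := by
      have h : η ≤ η₂ / 3 := (min_le_right _ _).trans (min_le_right _ _)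
      linarith
    obtain ⟨N, hN⟩ := Metric.tendsto_atTop.mp hDto0 η hη
    have hDN : ∀ n, N ≤ n → dist (x n) (x (n + 1)) < η := by
      intro n hn
      have := hN n hn
      rw [Real.dist_eq, sub_zero, abs_of_nonneg (hD0 n).le] at this
      simpa only [hDdef] using this
    obtain ⟨a, ha, b, hb, hab⟩ := hC N
    have hne' : a ≠ b := by
      intro h; rw [h, dist_self] at hab; linarith
    obtain ⟨p, q, hpq, hpN, hεpq⟩ : ∃ p q, p < q ∧ N ≤ p ∧ ε ≤ dist (x p) (x q) := by
      rcases lt_or_gt_of_ne hne' with h | h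
      · exact ⟨a, b, h, ha, hab⟩
      · exact ⟨b, a, h, hb, by rwa [dist_comm]⟩
    have hex : ∃ j, p < j ∧ ε ≤ dist (x p) (x j) := ⟨q, hpq, hεpq⟩
    obtain ⟨n, ⟨hpn, hεn⟩, hmin⟩ :
        ∃ n, (p < n ∧ ε ≤ dist (x p) (x n)) ∧
          ∀ j, j < n → ¬(p < j ∧ ε ≤ dist (x p) (x j)) :=
      ⟨Nat.find hex, Nat.find_spec hex, fun j hj => Nat.find_min hex hj⟩
    obtain ⟨k, rfl⟩ : ∃ k, n = k + 1 := ⟨n - 1, by omega⟩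
    have hpk : p ≤ k := by omega
    have hprev : dist (x p) (x k) < ε := by
      rcases eq_or_lt_of_le hpk with h | h
      · rw [← h, dist_self]; exact hε
      · by_contra hge
        push_neg at hge
        exact hmin k (Nat.lt_succ_self k) ⟨h, hge⟩
    have hDp : dist (x p) (x (p + 1)) < η := hDN p hpN
    have hDk : dist (x k) (x (k + 1)) < η := hDN k (hpN.trans hpk)
    have hDk1 : dist (x (k + 1)) (x (k + 1 + 1)) < η := hDN (k + 1) (by omega)
    set r := dist (x p) (x (k + 1)) with hrdef
    have hr1 : ε ≤ r := hεn
    have hr2 : r < ε + η := by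
      have ht := dist_triangle (x p) (x k) (x (k + 1))
      rw [hrdef]; linarith
    set s := dist (x (p + 1)) (x (k + 1 + 1)) with hsdef
    set R := r + dist (x p) (x (p + 1)) + dist (x (k + 1)) (x (k + 1 + 1)) with hRdef
    have hRr : r ≤ R := by
      rw [hRdef]
      linarith [(dist_nonneg : (0:ℝ) ≤ dist (x p) (x (p+1))),
        (dist_nonneg : (0:ℝ) ≤ dist (x (k+1)) (x (k+1+1)))]
    have hRnn : (0:ℝ) ≤ R := le_trans dist_nonneg hRr
    have hRub : R < ε + 3 * η := by rw [hRdef]; linarith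
    have hslb : ε - 2 * η < s := by
      have ht := dist_triangle4 (x p) (x (p + 1)) (x (k + 1 + 1)) (x (k + 1))
      rw [dist_comm (x (k + 1 + 1)) (x (k + 1))] at ht
      have : r ≤ dist (x p) (x (p+1)) + s + dist (x (k+1)) (x (k+1+1)) := ht
      linarith
    have hsub : s < ε + 3 * η := by
      have ht := dist_triangle4 (x (p + 1)) (x p) (x (k + 1)) (x (k + 1 + 1))
      rw [dist_comm (x (p + 1)) (x p)] at ht
      have : s ≤ dist (x p) (x (p+1)) + r + dist (x (k+1)) (x (k+1+1)) := ht
      linarith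
    -- continuity bounds
    have hφs : |φ s - φ ε| < γ := by
      have := hcont (Set.mem_Ici.mpr dist_nonneg)
        (by rw [Real.dist_eq, abs_lt]; constructor <;> linarith)
      rwa [Real.dist_eq] at this
    have hφR : |φ R - φ ε| < γ := by
      have := hcont (Set.mem_Ici.mpr hRnn)
        (by rw [Real.dist_eq, abs_lt]; constructor <;> linarith)
      rwa [Real.dist_eq] at this
    -- contraction at the pair (x p, x (k+1))
    have hxpq : x p ≠ x (k + 1) := by
      intro h
      rw [hrdef, h, dist_self] at hr1
      linarith
    have hc := hcontr (x p) (x (k + 1)) hxpq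
    simp only [MAlt, eAlt, ← hxsucc] at hc
    have hMle : max (max (φ (dist (x p) (x (k + 1))))
          ((φ (dist (x p) (x (p + 1))) + φ (dist (x (k + 1)) (x (k + 1 + 1)))) / 2))
        (min (φ (dist (x p) (x (k + 1 + 1)))) (φ (dist (x (p + 1)) (x (k + 1))))) ≤ φ R := by
      have h1 : φ (dist (x p) (x (k + 1))) ≤ φ R := φmono _ _ dist_nonneg hRr
      have h2 : φ (dist (x p) (x (p + 1))) ≤ φ R :=
        φmono _ _ dist_nonneg (by rw [hRdef]; linarith)
      have h3 : φ (dist (x (k + 1)) (x (k + 1 + 1))) ≤ φ R :=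
        φmono _ _ dist_nonneg (by rw [hRdef]; linarith)
      have h4 : φ (dist (x p) (x (k + 1 + 1))) ≤ φ R := by
        refine φmono _ _ dist_nonneg ?_
        have := dist_triangle (x p) (x (k + 1)) (x (k + 1 + 1))
        rw [hRdef]; linarith [(dist_nonneg : (0:ℝ) ≤ dist (x p) (x (p+1)))]
      exact max_le (max_le h1 (by linarith)) (le_trans (min_le_left _ _) h4)
    have hMnn : (0:ℝ) ≤ max (max (φ (dist (x p) (x (k + 1))))
          ((φ (dist (x p) (x (p + 1))) + φ (dist (x (k + 1)) (x (k + 1 + 1)))) / 2))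
        (min (φ (dist (x p) (x (k + 1 + 1)))) (φ (dist (x (p + 1)) (x (k + 1))))) :=
      le_max_of_le_left (le_max_of_le_left (hφnn _ dist_nonneg))
    have hψr : ψ (dist (x p) (x (k + 1))) ≤ θ :=
      hθr r hr1 (hr2.trans_le (by linarith))
    have hfin : φ s ≤ θ * φ R :=
      le_trans hc (mul_le_mul hψr hMle hMnn hθ0)
    have h1 : φ ε - γ < φ s := by have := abs_lt.mp hφs; linarith
    have h2 : φ R < φ ε + γ := by have := abs_lt.mp hφR; linarith
    have h3 : θ * φ R ≤ θ * (φ ε + γ) := mul_le_mul_of_nonneg_left h2.le hθ0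
    have hγeq : 2 * γ = (1 - θ) * φ ε := by rw [hγdef]; ring
    nlinarith [mul_pos (show (0:ℝ) < 1 - θ by linarith) hγpos]
end

section
/- Let (X,d) be a metric space, φ : [0,∞) → [0,∞) an altering function, e(x,y) = φ(d(x,y)), and M(x,y) = max{e(x,y), (1/2)[e(x,Tx)+e(y,Ty)], min{e(x,Ty), e(Tx,y)}}. Let ψ : [0,∞) → [0,∞) satisfy ψ(s) < 1 for all s > 0, and suppose T : X → X satisfies e(Tx,Ty) ≤ ψ(d(x,y))·M(x,y) for all x,y ∈ X with x ≠ y. Then the fixed point set Fix(T) = {x ∈ X : x = Tx} is an asingleton: if z₁, z₂ ∈ Fix(T) then z₁ = z₂. -/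
open Filter Topology

/-- **Asingleton property of `Fix(T)`.** If `T` is `(d,e;M;ψ)`-contractive with
`ψ` strictly subunitary on `(0,∞)`, then the fixed point set of `T` is an
asingleton: any two fixed points coincide. -/
theorem fix_asingleton {X : Type*} [MetricSpace X]
    (T : X → X) (φ ψ : ℝ → ℝ) (hφ : IsAltering φ)
    (hψnonneg : ∀ s, 0 ≤ s → 0 ≤ ψ s) (hψsub : StrictlySubunitary ψ)
    (hcontr : ∀ x y : X, x ≠ y → eAlt φ (T x) (T y) ≤ ψ (dist x y) * MAlt φ T x y) :
    ∀ z₁ z₂ : X, z₁ = T z₁ → z₂ = T z₂ → z₁ = z₂ := by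
  intro z₁ z₂ h1 h2
  by_contra hne
  obtain ⟨-, -, hnn, hzero⟩ := hφ
  have hd : 0 < dist z₁ z₂ := dist_pos.mpr hne
  have he : 0 < eAlt φ z₁ z₂ := by
    have := hnn (dist z₁ z₂) dist_nonneg
    rcases this.lt_or_eq with h | h
    · exact h
    · exfalso; exact hne (dist_eq_zero.mp ((hzero _ dist_nonneg).mp h.symm))
  have hM : MAlt φ T z₁ z₂ = eAlt φ z₁ z₂ := by
    unfold MAlt
    rw [← h1, ← h2]
    have h0 : eAlt φ z₁ z₁ = 0 := by
      unfold eAlt; rw [dist_self]; exact (hzero 0 le_rfl).mpr rfl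
    have h0' : eAlt φ z₂ z₂ = 0 := by
      unfold eAlt; rw [dist_self]; exact (hzero 0 le_rfl).mpr rfl
    rw [h0, h0']
    simp [he.le]
  have := hcontr z₁ z₂ hne
  rw [← h1, ← h2, hM] at this
  have hlt : ψ (dist z₁ z₂) * eAlt φ z₁ z₂ < 1 * eAlt φ z₁ z₂ :=
    mul_lt_mul_of_pos_right (hψsub _ hd) he
  rw [one_mul] at hlt
  linarith
end

section
/- Let (X,d) be a complete metric space, φ : [0,∞) → [0,∞) an altering function, e(x,y) = φ(d(x,y)), and M(x,y) = max{e(x,y), (1/2)[e(x,Tx)+e(y,Ty)], min{e(x,Ty), e(Tx,y)}}. Let ψ : [0,∞) → [0,∞) be strictly subunitary on (0,∞) and right Boyd-Wong on (0,∞), and suppose T : X → X satisfies e(Tx,Ty) ≤ ψ(d(x,y))·M(x,y) for all x,y ∈ X with x ≠ y. Then T is a globally strong Picard operator (modulo d): Fix(T) is a singleton {z}, and for each x ∈ X the sequence (Tⁿx; n ≥ 0) converges in (X,d) to z. -/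
open Filter Topology

private lemma tendsto_phi_aux {φ : ℝ → ℝ} (hc : ContinuousOn φ (Set.Ici 0))
    {u : ℕ → ℝ} {t : ℝ} (hu : ∀ n, 0 ≤ u n) (ht : 0 ≤ t)
    (h : Tendsto u atTop (𝓝 t)) : Tendsto (fun n => φ (u n)) atTop (𝓝 (φ t)) :=
  (hc t (Set.mem_Ici.mpr ht)).tendsto.comp
    (tendsto_nhdsWithin_of_tendsto_nhds_of_eventually_within u h
      (Eventually.of_forall fun n => Set.mem_Ici.mpr (hu n)))

private lemma step_lemma {X : Type*} [MetricSpace X]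
    (T : X → X) (φ ψ : ℝ → ℝ) (hφ : IsAltering φ)
    (hψnonneg : ∀ s, 0 ≤ s → 0 ≤ ψ s) (hψsub : StrictlySubunitary ψ)
    (hcontr : ∀ x y : X, x ≠ y → eAlt φ (T x) (T y) ≤ ψ (dist x y) * MAlt φ T x y)
    (a : X) (h0 : a ≠ T a) (h1 : T a ≠ T (T a)) :
    φ (dist (T a) (T (T a))) ≤ ψ (dist a (T a)) * φ (dist a (T a)) ∧
      dist (T a) (T (T a)) < dist a (T a) := by
  obtain ⟨hφc, hφm, hφnn, hφiff⟩ := hφ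
  have hφ0 : φ 0 = 0 := (hφiff 0 le_rfl).mpr rfl
  have hd0 : 0 < dist a (T a) := dist_pos.mpr h0
  have hd1 : 0 < dist (T a) (T (T a)) := dist_pos.mpr h1
  have he0 : 0 < φ (dist a (T a)) := by
    rcases (hφnn (dist a (T a)) dist_nonneg).lt_or_eq with h | h
    · exact h
    · exact absurd ((hφiff _ dist_nonneg).mp h.symm) hd0.ne'
  have he1 : 0 < φ (dist (T a) (T (T a))) := by
    rcases (hφnn (dist (T a) (T (T a))) dist_nonneg).lt_or_eq with h | h
    · exact h
    · exact absurd ((hφiff _ dist_nonneg).mp h.symm) hd1.ne'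
  have hψlt : ψ (dist a (T a)) < 1 := hψsub _ hd0
  have hψnn' : 0 ≤ ψ (dist a (T a)) := hψnonneg _ dist_nonneg
  have hM : MAlt φ T a (T a)
      = max (φ (dist a (T a))) ((φ (dist a (T a)) + φ (dist (T a) (T (T a)))) / 2) := by
    simp only [MAlt, eAlt]
    rw [dist_self, hφ0, min_eq_right (hφnn _ dist_nonneg)]
    exact max_eq_left (le_trans (hφnn _ dist_nonneg) (le_max_left _ _))
  have hcon := hcontr a (T a) h0
  rw [hM] at hcon
  simp only [eAlt] at hcon
  by_cases hcase : φ (dist (T a) (T (T a))) ≤ φ (dist a (T a))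
  · have hMle : max (φ (dist a (T a))) ((φ (dist a (T a)) + φ (dist (T a) (T (T a)))) / 2)
        = φ (dist a (T a)) := by
      apply max_eq_left; linarith
    rw [hMle] at hcon
    refine ⟨hcon, ?_⟩
    by_contra hge
    push_neg at hge
    have hmono : φ (dist a (T a)) ≤ φ (dist (T a) (T (T a))) :=
      hφm (Set.mem_Ici.mpr dist_nonneg) (Set.mem_Ici.mpr dist_nonneg) hge
    nlinarith [mul_lt_mul_of_pos_right hψlt he0]
  · push_neg at hcase
    exfalso
    have hMle : max (φ (dist a (T a))) ((φ (dist a (T a)) + φ (dist (T a) (T (T a)))) / 2)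
        ≤ φ (dist (T a) (T (T a))) := by
      apply max_le (le_of_lt hcase); linarith
    nlinarith [mul_le_mul_of_nonneg_left hMle hψnn', mul_lt_mul_of_pos_right hψlt he1]

private lemma uniq_aux {X : Type*} [MetricSpace X]
    (T : X → X) (φ ψ : ℝ → ℝ) (hφ : IsAltering φ)
    (hψsub : StrictlySubunitary ψ)
    (hcontr : ∀ x y : X, x ≠ y → eAlt φ (T x) (T y) ≤ ψ (dist x y) * MAlt φ T x y)
    {z w : X} (hz : T z = z) (hw : T w = w) : w = z := by
  by_contra hne
  have hd : 0 < dist w z := dist_pos.mpr hne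
  obtain ⟨hφc, hφm, hφnn, hφiff⟩ := hφ
  have hφ0 : φ 0 = 0 := (hφiff 0 le_rfl).mpr rfl
  have he : 0 < φ (dist w z) := by
    rcases (hφnn (dist w z) dist_nonneg).lt_or_eq with h | h
    · exact h
    · exact absurd ((hφiff _ dist_nonneg).mp h.symm) hd.ne'
  have hM : MAlt φ T w z = φ (dist w z) := by
    simp only [MAlt, eAlt, hz, hw, dist_self, hφ0, min_self]
    rw [show ((0:ℝ) + 0) / 2 = 0 by norm_num, max_eq_left (hφnn _ dist_nonneg), max_self]
  have hcon := hcontr w z hne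
  rw [hM] at hcon
  simp only [eAlt, hz, hw] at hcon
  nlinarith [mul_lt_mul_of_pos_right (hψsub _ hd) he]

private lemma orbit_aux {X : Type*} [MetricSpace X] [CompleteSpace X]
    (T : X → X) (φ ψ : ℝ → ℝ) (hφ : IsAltering φ)
    (hψnonneg : ∀ s, 0 ≤ s → 0 ≤ ψ s)
    (hψsub : StrictlySubunitary ψ) (hψbw : RightBoydWong ψ)
    (hcontr : ∀ x y : X, x ≠ y → eAlt φ (T x) (T y) ≤ ψ (dist x y) * MAlt φ T x y)
    (x : X) : ∃ w : X, T w = w ∧ Tendsto (fun n : ℕ => T^[n] x) atTop (𝓝 w) := by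
  obtain ⟨hφc, hφm, hφnn, hφiff⟩ := id hφ
  have hφ0 : φ 0 = 0 := (hφiff 0 le_rfl).mpr rfl
  set S : ℕ → X := fun n => T^[n] x with hSdef
  have hS1 : ∀ n, S (n + 1) = T (S n) := fun n => Function.iterate_succ_apply' T n x
  by_cases hA : ∃ n, T (S n) = S n
  · obtain ⟨n0, hn0⟩ := hA
    refine ⟨S n0, hn0, tendsto_atTop_of_eventually_const (i₀ := n0) ?_⟩
    intro m hm
    induction m, hm using Nat.le_induction with
    | base => rfl
    | succ m hm ih => rw [hS1 m, ih, hn0]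
  push_neg at hA
  have hne2 : ∀ n, S n ≠ S (n + 1) := by
    intro n h
    exact hA n (by rw [← hS1 n]; exact h.symm)
  set dd : ℕ → ℝ := fun n => dist (S n) (S (n + 1)) with hdddef
  have hstep : ∀ n, φ (dd (n + 1)) ≤ ψ (dd n) * φ (dd n) ∧ dd (n + 1) < dd n := by
    intro n
    have h0 : S n ≠ T (S n) := by rw [← hS1 n]; exact hne2 n
    have h1 : T (S n) ≠ T (T (S n)) := by rw [← hS1 n, ← hS1 (n + 1)]; exact hne2 (n + 1)
    have h2 := step_lemma T φ ψ ⟨hφc, hφm, hφnn, hφiff⟩ hψnonneg hψsub hcontr (S n) h0 h1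
    rw [← hS1 n, ← hS1 (n + 1)] at h2
    exact h2
  have hanti : StrictAnti dd := strictAnti_nat_of_succ_lt fun n => (hstep n).2
  have hbdd : BddBelow (Set.range dd) := ⟨0, by rintro _ ⟨n, rfl⟩; exact dist_nonneg⟩
  have hconv : Tendsto dd atTop (𝓝 (⨅ n, dd n)) := tendsto_atTop_ciInf hanti.antitone hbdd
  have hδnn : (0:ℝ) ≤ ⨅ n, dd n := le_ciInf fun n => dist_nonneg
  have hδ0 : (⨅ n, dd n) = 0 := by
    by_contra hδ
    have hδpos : 0 < ⨅ n, dd n := hδnn.lt_of_ne (Ne.symm hδ)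
    have hgt : ∀ n, (⨅ n, dd n) < dd n :=
      fun n => lt_of_le_of_lt (ciInf_le hbdd (n + 1)) (hstep n).2
    have htendsub : Tendsto dd atTop (𝓝[>] (⨅ n, dd n)) :=
      tendsto_nhdsWithin_of_tendsto_nhds_of_eventually_within dd hconv (Eventually.of_forall hgt)
    obtain ⟨a, ha, halt⟩ : ∃ a ∈ {a | ∀ᶠ t in 𝓝[>] (⨅ n, dd n), ψ t ≤ a}, a < 1 := by
      apply exists_lt_of_csInf_lt
      · exact ⟨1, eventually_nhdsWithin_of_forall fun t ht =>
          (hψsub t (hδpos.trans (Set.mem_Ioi.mp ht))).le⟩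
      · rw [← Filter.limsup_eq]; exact hψbw _ hδpos
    have hev : ∀ᶠ n in atTop, ψ (dd n) ≤ a := htendsub.eventually ha
    have hφδpos : 0 < φ (⨅ n, dd n) := by
      rcases (hφnn _ hδnn).lt_or_eq with h | h
      · exact h
      · exact absurd ((hφiff _ hδnn).mp h.symm) hδ
    have hφconv : Tendsto (fun n => φ (dd n)) atTop (𝓝 (φ (⨅ n, dd n))) :=
      tendsto_phi_aux hφc (fun n => dist_nonneg) hδnn hconv
    have hφconv' : Tendsto (fun n => φ (dd (n + 1))) atTop (𝓝 (φ (⨅ n, dd n))) :=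
      hφconv.comp (tendsto_add_atTop_nat 1)
    have hle : φ (⨅ n, dd n) ≤ a * φ (⨅ n, dd n) := by
      apply le_of_tendsto_of_tendsto hφconv' (tendsto_const_nhds.mul hφconv)
      filter_upwards [hev] with n hn
      calc φ (dd (n + 1)) ≤ ψ (dd n) * φ (dd n) := (hstep n).1
        _ ≤ a * φ (dd n) := mul_le_mul_of_nonneg_right hn (hφnn _ dist_nonneg)
    nlinarith [mul_lt_mul_of_pos_right halt hφδpos]
  have hdd0 : Tendsto dd atTop (𝓝 0) := hδ0 ▸ hconv
  have hcauchy : CauchySeq S := by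
    by_contra hnc
    rw [Metric.cauchySeq_iff] at hnc
    push_neg at hnc
    obtain ⟨ε, hε, hNC⟩ := hnc
    have key : ∀ N : ℕ, ∃ p q : ℕ, N ≤ p ∧ p < q ∧ ε ≤ dist (S p) (S q) ∧
        dist (S p) (S q) < ε + dd (q - 1) := by
      intro N
      obtain ⟨m, hm, n, hn, hd⟩ := hNC N
      have hmn : m ≠ n := by
        intro h; rw [h, dist_self] at hd; linarith
      obtain ⟨p, q0, hNp, hpq0, hd0⟩ : ∃ p q0, N ≤ p ∧ p < q0 ∧ ε ≤ dist (S p) (S q0) := by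
        rcases hmn.lt_or_gt with h | h
        · exact ⟨m, n, hm, h, hd⟩
        · exact ⟨n, m, hn, h, by rwa [dist_comm]⟩
      have hex : ∃ q, p < q ∧ ε ≤ dist (S p) (S q) := ⟨q0, hpq0, hd0⟩
      obtain ⟨hpq, hdq⟩ := Nat.find_spec hex
      refine ⟨p, Nat.find hex, hNp, hpq, hdq, ?_⟩
      have hqpos : 0 < Nat.find hex := lt_of_le_of_lt (Nat.zero_le p) hpq
      have hq1 : p ≤ Nat.find hex - 1 := Nat.le_pred_of_lt hpq
      have hprev : dist (S p) (S (Nat.find hex - 1)) < ε := by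
        rcases eq_or_lt_of_le hq1 with h | h
        · rw [← h, dist_self]; exact hε
        · have hmin := Nat.find_min hex (Nat.sub_lt hqpos one_pos)
          push_neg at hmin
          exact hmin h
      have hddq : dd (Nat.find hex - 1) = dist (S (Nat.find hex - 1)) (S (Nat.find hex)) := by
        have h1 : Nat.find hex - 1 + 1 = Nat.find hex := Nat.succ_pred_eq_of_pos hqpos
        simp only [hdddef]
        rw [h1]
      have htri := dist_triangle (S p) (S (Nat.find hex - 1)) (S (Nat.find hex))
      linarith
    choose p q hNp hpq hge hlt using key
    have hqsub : ∀ N, N ≤ q N - 1 := fun N => le_trans (hNp N) (Nat.le_pred_of_lt (hpq N))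
    have hp_top : Tendsto p atTop atTop := tendsto_atTop_mono hNp tendsto_id
    have hq_top : Tendsto q atTop atTop :=
      tendsto_atTop_mono (fun N => le_of_lt (lt_of_le_of_lt (hNp N) (hpq N))) tendsto_id
    have hq1_top : Tendsto (fun N => q N - 1) atTop atTop := tendsto_atTop_mono hqsub tendsto_id
    have hddp : Tendsto (fun N => dd (p N)) atTop (𝓝 0) := hdd0.comp hp_top
    have hddq : Tendsto (fun N => dd (q N)) atTop (𝓝 0) := hdd0.comp hq_top
    have hddq1 : Tendsto (fun N => dd (q N - 1)) atTop (𝓝 0) := hdd0.comp hq1_top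
    set D : ℕ → ℝ := fun N => dist (S (p N)) (S (q N)) with hDdef
    set A : ℕ → ℝ := fun N => dist (S (p N + 1)) (S (q N + 1)) with hAdef
    set B : ℕ → ℝ := fun N => dist (S (p N)) (S (q N + 1)) with hBdef
    have hgeD : ∀ N, ε ≤ D N := hge
    have hltD : ∀ N, D N < ε + dd (q N - 1) := hlt
    have hD : Tendsto D atTop (𝓝 ε) := by
      apply tendsto_of_tendsto_of_tendsto_of_le_of_le'
        (g := fun _ => ε) (h := fun N => ε + dd (q N - 1)) tendsto_const_nhds
      · simpa using tendsto_const_nhds.add hddq1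
      · exact Eventually.of_forall hgeD
      · exact Eventually.of_forall fun N => (hltD N).le
    have hA : Tendsto A atTop (𝓝 ε) := by
      apply tendsto_of_tendsto_of_tendsto_of_le_of_le'
        (g := fun N => D N - dd (p N) - dd (q N)) (h := fun N => D N + dd (p N) + dd (q N))
      · simpa using (hD.sub hddp).sub hddq
      · simpa using (hD.add hddp).add hddq
      · apply Eventually.of_forall
        intro N
        have t := dist_triangle4 (S (p N)) (S (p N + 1)) (S (q N + 1)) (S (q N))
        rw [dist_comm (S (q N + 1)) (S (q N))] at t
        have h1 : D N ≤ dd (p N) + A N + dd (q N) := t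
        show D N - dd (p N) - dd (q N) ≤ A N
        linarith
      · apply Eventually.of_forall
        intro N
        have t := dist_triangle4 (S (p N + 1)) (S (p N)) (S (q N)) (S (q N + 1))
        rw [dist_comm (S (p N + 1)) (S (p N))] at t
        have h1 : A N ≤ dd (p N) + D N + dd (q N) := t
        show A N ≤ D N + dd (p N) + dd (q N)
        linarith
    have hB : Tendsto B atTop (𝓝 ε) := by
      apply tendsto_of_tendsto_of_tendsto_of_le_of_le'
        (g := fun N => D N - dd (q N)) (h := fun N => D N + dd (q N))
      · simpa using hD.sub hddq
      · simpa using hD.add hddq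
      · apply Eventually.of_forall
        intro N
        have t := dist_triangle (S (p N)) (S (q N + 1)) (S (q N))
        rw [dist_comm (S (q N + 1)) (S (q N))] at t
        have h1 : D N ≤ B N + dd (q N) := t
        show D N - dd (q N) ≤ B N
        linarith
      · apply Eventually.of_forall
        intro N
        have t := dist_triangle (S (p N)) (S (q N)) (S (q N + 1))
        have h1 : B N ≤ D N + dd (q N) := t
        show B N ≤ D N + dd (q N)
        linarith
    obtain ⟨a, ha, halt⟩ : ∃ a ∈ {a | ∀ᶠ t in 𝓝[>] ε, ψ t ≤ a}, a < 1 := by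
      apply exists_lt_of_csInf_lt
      · exact ⟨1, eventually_nhdsWithin_of_forall fun t ht =>
          (hψsub t (hε.trans (Set.mem_Ioi.mp ht))).le⟩
      · rw [← Filter.limsup_eq]; exact hψbw ε hε
    obtain ⟨u, hu, hIoo⟩ := mem_nhdsGT_iff_exists_Ioo_subset.mp ha
    have hk1 : max a (ψ ε) < 1 := max_lt halt (hψsub ε hε)
    have hknn : (0:ℝ) ≤ max a (ψ ε) := le_trans (hψnonneg ε hε.le) (le_max_right _ _)
    have hψev : ∀ᶠ N in atTop, ψ (D N) ≤ max a (ψ ε) := by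
      have hupos : (0:ℝ) < u - ε := sub_pos.mpr (Set.mem_Ioi.mp hu)
      have hsmall : ∀ᶠ N in atTop, dd (q N - 1) < u - ε := hddq1.eventually_lt_const hupos
      filter_upwards [hsmall] with N hN
      rcases eq_or_lt_of_le (hgeD N) with h | h
      · rw [← h]; exact le_max_right a (ψ ε)
      · have hDu : D N < u := by have := hltD N; linarith
        exact le_trans (hIoo ⟨h, hDu⟩) (le_max_left _ _)
    have hne3 : ∀ N, S (p N) ≠ S (q N) := fun N => dist_pos.mp (lt_of_lt_of_le hε (hgeD N))
    have hcontr' : ∀ N, φ (A N) ≤ ψ (D N) * MAlt φ T (S (p N)) (S (q N)) := by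
      intro N
      have h := hcontr (S (p N)) (S (q N)) (hne3 N)
      simp only [eAlt] at h
      rw [← hS1 (p N), ← hS1 (q N)] at h
      exact h
    have hMnn : ∀ N, 0 ≤ MAlt φ T (S (p N)) (S (q N)) := by
      intro N
      simp only [MAlt, eAlt]
      exact le_trans (hφnn _ dist_nonneg) (le_trans (le_max_left _ _) (le_max_left _ _))
    have hMle : ∀ N, MAlt φ T (S (p N)) (S (q N)) ≤
        max (max (φ (D N)) ((φ (dd (p N)) + φ (dd (q N))) / 2)) (φ (B N)) := by
      intro N
      simp only [MAlt, eAlt]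
      rw [← hS1 (p N), ← hS1 (q N)]
      exact max_le_max (le_refl _) (min_le_left _ _)
    have hfin : ∀ᶠ N in atTop, φ (A N) ≤
        max a (ψ ε) * max (max (φ (D N)) ((φ (dd (p N)) + φ (dd (q N))) / 2)) (φ (B N)) := by
      filter_upwards [hψev] with N hN
      calc φ (A N) ≤ ψ (D N) * MAlt φ T (S (p N)) (S (q N)) := hcontr' N
        _ ≤ max a (ψ ε) * MAlt φ T (S (p N)) (S (q N)) :=
            mul_le_mul_of_nonneg_right hN (hMnn N)
        _ ≤ max a (ψ ε) * max (max (φ (D N)) ((φ (dd (p N)) + φ (dd (q N))) / 2)) (φ (B N)) :=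
            mul_le_mul_of_nonneg_left (hMle N) hknn
    have hφA : Tendsto (fun N => φ (A N)) atTop (𝓝 (φ ε)) :=
      tendsto_phi_aux hφc (fun N => dist_nonneg) hε.le hA
    have hφD : Tendsto (fun N => φ (D N)) atTop (𝓝 (φ ε)) :=
      tendsto_phi_aux hφc (fun N => dist_nonneg) hε.le hD
    have hφB : Tendsto (fun N => φ (B N)) atTop (𝓝 (φ ε)) :=
      tendsto_phi_aux hφc (fun N => dist_nonneg) hε.le hB
    have hφp : Tendsto (fun N => φ (dd (p N))) atTop (𝓝 0) := by
      have := tendsto_phi_aux hφc (fun N => dist_nonneg) le_rfl hddp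
      rwa [hφ0] at this
    have hφq : Tendsto (fun N => φ (dd (q N))) atTop (𝓝 0) := by
      have := tendsto_phi_aux hφc (fun N => dist_nonneg) le_rfl hddq
      rwa [hφ0] at this
    have hU : Tendsto
        (fun N => max (max (φ (D N)) ((φ (dd (p N)) + φ (dd (q N))) / 2)) (φ (B N)))
        atTop (𝓝 (φ ε)) := by
      have h := (hφD.max ((hφp.add hφq).div_const 2)).max hφB
      have he : max (max (φ ε) (((0:ℝ) + 0) / 2)) (φ ε) = φ ε := by
        rw [show ((0:ℝ) + 0) / 2 = 0 by norm_num, max_eq_left (hφnn ε hε.le), max_self]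
      rwa [he] at h
    have hfinle : φ ε ≤ max a (ψ ε) * φ ε :=
      le_of_tendsto_of_tendsto hφA (tendsto_const_nhds.mul hU) hfin
    have hφεpos : 0 < φ ε := by
      rcases (hφnn ε hε.le).lt_or_eq with h | h
      · exact h
      · exact absurd ((hφiff ε hε.le).mp h.symm) hε.ne'
    nlinarith [mul_lt_mul_of_pos_right hk1 hφεpos]
  obtain ⟨w, hw⟩ := cauchySeq_tendsto_of_complete hcauchy
  have hSw1 : Tendsto (fun n => S (n + 1)) atTop (𝓝 w) := hw.comp (tendsto_add_atTop_nat 1)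
  have hinj : Function.Injective S := by
    intro i j hij
    by_contra hne'
    have hsucc : S (i + 1) = S (j + 1) := by rw [hS1 i, hS1 j, hij]
    have hddij : dd i = dd j := by simp only [hdddef]; rw [hij, hsucc]
    rcases Ne.lt_or_gt hne' with h | h
    · exact absurd hddij (ne_of_gt (hanti h))
    · exact absurd hddij (ne_of_lt (hanti h))
  have hevne : ∀ᶠ n in atTop, S n ≠ w := by
    by_cases hex : ∃ n0, S n0 = w
    · obtain ⟨n0, hn0⟩ := hex
      filter_upwards [eventually_gt_atTop n0] with n hn h
      exact hn.ne' (hinj (h.trans hn0.symm))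
    · push_neg at hex
      exact Eventually.of_forall hex
  have hkey : ∀ᶠ n in atTop, φ (dist (S (n + 1)) (T w)) ≤
      max (max (φ (dist (S n) w)) ((φ (dd n) + φ (dist w (T w))) / 2))
        (min (φ (dist (S n) (T w))) (φ (dist (S (n + 1)) w))) := by
    filter_upwards [hevne] with n hn
    have h := hcontr (S n) w hn
    simp only [MAlt, eAlt] at h
    rw [← hS1 n] at h
    have hψ1 : ψ (dist (S n) w) ≤ 1 := (hψsub _ (dist_pos.mpr hn)).le
    have hψnn2 : 0 ≤ ψ (dist (S n) w) := hψnonneg _ dist_nonneg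
    have hMnn2 : (0:ℝ) ≤ max (max (φ (dist (S n) w)) ((φ (dd n) + φ (dist w (T w))) / 2))
        (min (φ (dist (S n) (T w))) (φ (dist (S (n + 1)) w))) :=
      le_trans (hφnn _ dist_nonneg) (le_trans (le_max_left _ _) (le_max_left _ _))
    calc φ (dist (S (n + 1)) (T w))
        ≤ ψ (dist (S n) w) * max (max (φ (dist (S n) w)) ((φ (dd n) + φ (dist w (T w))) / 2))
          (min (φ (dist (S n) (T w))) (φ (dist (S (n + 1)) w))) := h
      _ ≤ 1 * max (max (φ (dist (S n) w)) ((φ (dd n) + φ (dist w (T w))) / 2))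
          (min (φ (dist (S n) (T w))) (φ (dist (S (n + 1)) w))) :=
          mul_le_mul_of_nonneg_right hψ1 hMnn2
      _ = _ := one_mul _
  have hLnn : 0 ≤ φ (dist w (T w)) := hφnn _ dist_nonneg
  have t1 : Tendsto (fun n => φ (dist (S n) w)) atTop (𝓝 0) := by
    have := tendsto_phi_aux hφc (fun n => dist_nonneg) le_rfl
      (tendsto_iff_dist_tendsto_zero.mp hw)
    rwa [hφ0] at this
  have t2 : Tendsto (fun n => φ (dd n)) atTop (𝓝 0) := by
    have := tendsto_phi_aux hφc (fun n => dist_nonneg) le_rfl hdd0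
    rwa [hφ0] at this
  have t3 : Tendsto (fun n => φ (dist (S n) (T w))) atTop (𝓝 (φ (dist w (T w)))) :=
    tendsto_phi_aux hφc (fun n => dist_nonneg) dist_nonneg (hw.dist tendsto_const_nhds)
  have t4 : Tendsto (fun n => φ (dist (S (n + 1)) w)) atTop (𝓝 0) := by
    have := tendsto_phi_aux hφc (fun n => dist_nonneg) le_rfl
      (tendsto_iff_dist_tendsto_zero.mp hSw1)
    rwa [hφ0] at this
  have t5 : Tendsto (fun n => φ (dist (S (n + 1)) (T w))) atTop (𝓝 (φ (dist w (T w)))) :=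
    tendsto_phi_aux hφc (fun n => dist_nonneg) dist_nonneg (hSw1.dist tendsto_const_nhds)
  have hrhs := (t1.max ((t2.add (tendsto_const_nhds (x := φ (dist w (T w))))).div_const 2)).max
    (t3.min t4)
  have hval : max (max (0:ℝ) ((0 + φ (dist w (T w))) / 2)) (min (φ (dist w (T w))) 0)
      = φ (dist w (T w)) / 2 := by
    rw [min_eq_right hLnn, zero_add,
      max_eq_right (by linarith : (0:ℝ) ≤ φ (dist w (T w)) / 2),
      max_eq_left (by linarith : (0:ℝ) ≤ φ (dist w (T w)) / 2)]
  rw [hval] at hrhs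
  have hL2 : φ (dist w (T w)) ≤ φ (dist w (T w)) / 2 :=
    le_of_tendsto_of_tendsto t5 hrhs hkey
  have hL0 : φ (dist w (T w)) = 0 := le_antisymm (by linarith) hLnn
  have hd0 : dist w (T w) = 0 := (hφiff _ dist_nonneg).mp hL0
  exact ⟨w, (eq_of_dist_eq_zero hd0).symm, hw⟩

/-- **Theorem 2 (main result).** Let `(X,d)` be complete, `φ` an altering
function, and `ψ` strictly subunitary and right Boyd–Wong on `(0,∞)`. If `T` is
`(d,e;M;ψ)`-contractive, then `T` is a globally strong Picard operator:
`Fix(T)` is a singleton `{z}` and every orbit `Tⁿx` converges to `z`. -/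
theorem altering_contraction_globally_strong_picard {X : Type*} [MetricSpace X]
    [CompleteSpace X] [Nonempty X]
    (T : X → X) (φ ψ : ℝ → ℝ) (hφ : IsAltering φ)
    (hψnonneg : ∀ s, 0 ≤ s → 0 ≤ ψ s)
    (hψsub : StrictlySubunitary ψ) (hψbw : RightBoydWong ψ)
    (hcontr : ∀ x y : X, x ≠ y → eAlt φ (T x) (T y) ≤ ψ (dist x y) * MAlt φ T x y) :
    ∃ z : X, z = T z ∧ (∀ y : X, y = T y → y = z) ∧
      ∀ x : X, Tendsto (fun n : ℕ => T^[n] x) atTop (𝓝 z) := by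
  obtain ⟨x0⟩ := ‹Nonempty X›
  obtain ⟨z, hz, _⟩ := orbit_aux T φ ψ hφ hψnonneg hψsub hψbw hcontr x0
  refine ⟨z, hz.symm, ?_, ?_⟩
  · intro y hy
    exact uniq_aux T φ ψ hφ hψsub hcontr hz hy.symm
  · intro x
    obtain ⟨w, hwfix, hwt⟩ := orbit_aux T φ ψ hφ hψnonneg hψsub hψbw hcontr x
    rwa [uniq_aux T φ ψ hφ hψsub hcontr hz hwfix] at hwt
end

section
/- Let (X,d) be a complete metric space, φ : [0,∞) → [0,∞) an altering function, e(x,y) = φ(d(x,y)), and M(x,y) = max{e(x,y), (1/2)[e(x,Tx)+e(y,Ty)], min{e(x,Ty), e(Tx,y)}}. Let ψ : [0,∞) → [0,∞) be strictly subunitary and decreasing on (0,∞), and suppose T : X → X satisfies e(Tx,Ty) ≤ ψ(d(x,y))·M(x,y) for all x,y ∈ X with x ≠ y. Then T is a globally strong Picard operator (modulo d): Fix(T) is a singleton {z}, and for each x ∈ X the sequence (Tⁿx; n ≥ 0) converges in (X,d) to z. -/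
open Filter Topology

section Aux

variable {X : Type*} [MetricSpace X]

lemma phi_pos {φ : ℝ → ℝ} (hφ : IsAltering φ) {t : ℝ} (h : 0 < t) : 0 < φ t :=
  (hφ.2.2.1 t h.le).lt_of_ne fun h' =>
    absurd ((hφ.2.2.2 t h.le).1 h'.symm) h.ne'

lemma ealt_nonneg {φ : ℝ → ℝ} (hφ : IsAltering φ) (x y : X) : 0 ≤ eAlt φ x y :=
  hφ.2.2.1 _ dist_nonneg

lemma ealt_self {φ : ℝ → ℝ} (hφ : IsAltering φ) (x : X) : eAlt φ x x = 0 := by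
  unfold eAlt; rw [dist_self]; exact (hφ.2.2.2 0 le_rfl).mpr rfl

lemma ealt_pos {φ : ℝ → ℝ} (hφ : IsAltering φ) {x y : X} (h : x ≠ y) : 0 < eAlt φ x y := by
  rcases lt_or_eq_of_le (ealt_nonneg hφ x y) with h' | h'
  · exact h'
  · exact absurd (dist_eq_zero.1 ((hφ.2.2.2 _ dist_nonneg).1 h'.symm)) h

lemma onestep (T : X → X) {φ ψ : ℝ → ℝ} (hφ : IsAltering φ)
    (hψsub : StrictlySubunitary ψ)
    (hcontr : ∀ x y : X, x ≠ y → eAlt φ (T x) (T y) ≤ ψ (dist x y) * MAlt φ T x y)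
    (a : X) (h : a ≠ T a) :
    eAlt φ (T a) (T (T a)) ≤ ψ (dist a (T a)) * eAlt φ a (T a) ∧
      dist (T a) (T (T a)) ≤ dist a (T a) := by
  have hd : 0 < dist a (T a) := dist_pos.2 h
  have hψ : ψ (dist a (T a)) < 1 := hψsub _ hd
  have h0 : 0 < eAlt φ a (T a) := ealt_pos hφ h
  have hc := hcontr a (T a) h
  have hM : MAlt φ T a (T a) =
      max (eAlt φ a (T a)) ((eAlt φ a (T a) + eAlt φ (T a) (T (T a))) / 2) := by
    unfold MAlt
    rw [ealt_self hφ, min_eq_right (ealt_nonneg hφ _ _),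
      max_eq_left (le_trans (ealt_nonneg hφ a (T a)) (le_max_left _ _))]
  rw [hM] at hc
  have hle : eAlt φ (T a) (T (T a)) ≤ eAlt φ a (T a) := by
    by_contra h'
    push_neg at h'
    rw [max_eq_right (by linarith)] at hc
    nlinarith [ealt_nonneg hφ a (T a)]
  have h1 : eAlt φ (T a) (T (T a)) ≤ ψ (dist a (T a)) * eAlt φ a (T a) := by
    rwa [max_eq_left (by linarith)] at hc
  refine ⟨h1, ?_⟩
  by_contra h2
  push_neg at h2
  have hmono : eAlt φ a (T a) ≤ eAlt φ (T a) (T (T a)) :=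
    hφ.2.1 (Set.mem_Ici.2 dist_nonneg) (Set.mem_Ici.2 dist_nonneg) h2.le
  nlinarith [mul_lt_mul_of_pos_right hψ h0]

lemma fixed_unique (T : X → X) {φ ψ : ℝ → ℝ} (hφ : IsAltering φ)
    (hψsub : StrictlySubunitary ψ)
    (hcontr : ∀ x y : X, x ≠ y → eAlt φ (T x) (T y) ≤ ψ (dist x y) * MAlt φ T x y)
    {y z : X} (hy : y = T y) (hz : z = T z) : y = z := by
  by_contra h
  have hd : 0 < dist y z := dist_pos.2 h
  have hc := hcontr y z h
  rw [← hy, ← hz] at hc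
  have hM : MAlt φ T y z = eAlt φ y z := by
    unfold MAlt
    rw [← hy, ← hz, ealt_self hφ, ealt_self hφ, min_self]
    norm_num
    exact ealt_nonneg hφ y z
  rw [hM] at hc
  nlinarith [ealt_pos hφ h, hψsub _ hd]

end Aux
lemma orbit_converges {X : Type*} [MetricSpace X] [CompleteSpace X] (T : X → X)
    {φ ψ : ℝ → ℝ} (hφ : IsAltering φ)
    (hψnonneg : ∀ s, 0 ≤ s → 0 ≤ ψ s)
    (hψsub : StrictlySubunitary ψ) (hψdec : AntitoneOn ψ (Set.Ioi 0))
    (hcontr : ∀ x y : X, x ≠ y → eAlt φ (T x) (T y) ≤ ψ (dist x y) * MAlt φ T x y)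
    (x : X) : ∃ z : X, z = T z ∧ Tendsto (fun n : ℕ => T^[n] x) atTop (𝓝 z) := by
  classical
  set s : ℕ → X := fun n => T^[n] x with hs
  have hsucc : ∀ n, s (n + 1) = T (s n) := fun n => Function.iterate_succ_apply' T n x
  have hφ0 : φ 0 = 0 := (hφ.2.2.2 0 le_rfl).mpr rfl
  by_cases hA : ∃ n, s (n + 1) = s n
  · obtain ⟨n, hn⟩ := hA
    have hconst : ∀ m, s (n + m) = s n := by
      intro m
      induction m with
      | zero => rfl
      | succ m ih => rw [show n + (m + 1) = (n + m) + 1 from rfl, hsucc, ih, ← hsucc, hn]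
    refine ⟨s n, by rw [← hsucc, hn], ?_⟩
    apply tendsto_atTop_of_eventually_const (i₀ := n)
    intro m hm
    have h1 : s m = s (n + (m - n)) := by rw [Nat.add_sub_cancel' hm]
    rw [h1, hconst]
  · push_neg at hA
    have hne : ∀ n, s n ≠ s (n + 1) := fun n h => hA n h.symm
    set D : ℕ → ℝ := fun n => dist (s n) (s (n + 1)) with hDdef
    set E : ℕ → ℝ := fun n => φ (D n) with hEdef
    have hDd : ∀ k, dist (s k) (s (k + 1)) = D k := fun k => rfl
    have hEd : ∀ k, φ (dist (s k) (s (k + 1))) = E k := fun k => rfl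
    have hDpos : ∀ n, 0 < D n := fun n => dist_pos.2 (hne n)
    have hDnn : ∀ n, (0:ℝ) ≤ D n := fun n => dist_nonneg
    have hEnn : ∀ n, (0:ℝ) ≤ E n := fun n => hφ.2.2.1 _ (hDnn n)
    have hstep : ∀ n, E (n + 1) ≤ ψ (D n) * E n ∧ D (n + 1) ≤ D n := by
      intro n
      have h := onestep T hφ hψsub hcontr (s n) (by rw [← hsucc]; exact hne n)
      rw [← hsucc n] at h
      rw [← hsucc (n + 1)] at h
      exact h
    have hDanti : Antitone D := antitone_nat_of_succ_le fun n => (hstep n).2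
    have hbdd : BddBelow (Set.range D) := ⟨0, by rintro _ ⟨n, rfl⟩; exact hDnn n⟩
    have hinf : Tendsto D atTop (𝓝 (⨅ n, D n)) := tendsto_atTop_ciInf hDanti hbdd
    have hinf0 : (⨅ n, D n) = 0 := by
      by_contra hne0
      have h0le : 0 ≤ ⨅ n, D n := le_ciInf hDnn
      have hδ : 0 < ⨅ n, D n := h0le.lt_of_ne (Ne.symm hne0)
      have hδle : ∀ n, (⨅ k, D k) ≤ D n := fun n => ciInf_le hbdd n
      have hψb : ∀ n, ψ (D n) ≤ ψ (⨅ k, D k) := fun n =>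
        hψdec (Set.mem_Ioi.2 hδ) (Set.mem_Ioi.2 (hδ.trans_le (hδle n))) (hδle n)
      have hc1 : ψ (⨅ k, D k) < 1 := hψsub _ hδ
      have hc0 : 0 ≤ ψ (⨅ k, D k) := hψnonneg _ hδ.le
      have hgeo : ∀ n, E n ≤ ψ (⨅ k, D k) ^ n * E 0 := by
        intro n
        induction n with
        | zero => simp
        | succ n ih =>
          calc E (n + 1) ≤ ψ (D n) * E n := (hstep n).1
            _ ≤ ψ (⨅ k, D k) * E n := mul_le_mul_of_nonneg_right (hψb n) (hEnn n)
            _ ≤ ψ (⨅ k, D k) * (ψ (⨅ k, D k) ^ n * E 0) := mul_le_mul_of_nonneg_left ih hc0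
            _ = ψ (⨅ k, D k) ^ (n + 1) * E 0 := by ring
      have hφδ : 0 < φ (⨅ k, D k) := phi_pos hφ hδ
      have hlb : ∀ n, φ (⨅ k, D k) ≤ E n := fun n =>
        hφ.2.1 (Set.mem_Ici.2 hδ.le) (Set.mem_Ici.2 (hDnn n)) (hδle n)
      have htend0 : Tendsto (fun n => ψ (⨅ k, D k) ^ n * E 0) atTop (𝓝 0) := by
        simpa using (tendsto_pow_atTop_nhds_zero_of_lt_one hc0 hc1).mul_const (E 0)
      obtain ⟨n, hn⟩ := (htend0.eventually (gt_mem_nhds hφδ)).exists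
      exact absurd ((hlb n).trans (hgeo n)) (not_le.2 hn)
    rw [hinf0] at hinf
    have hφcont0 : Tendsto φ (𝓝[Set.Ici 0] 0) (𝓝 0) := by
      have h := (hφ.1 0 Set.self_mem_Ici).tendsto
      rwa [hφ0] at h
    have hE0 : Tendsto E atTop (𝓝 0) := by
      exact hφcont0.comp (tendsto_nhdsWithin_of_tendsto_nhds_of_eventually_within _ hinf
        (Eventually.of_forall fun n => Set.mem_Ici.2 (hDnn n)))
    have hη : 0 < φ 1 ∨ True := Or.inr trivial
    -- Cauchy
    have hcauchy : CauchySeq s := by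
      rw [Metric.cauchySeq_iff]
      by_contra hcs
      push_neg at hcs
      obtain ⟨ε, hε, hnc⟩ := hcs
      have hc1 : ψ ε < 1 := hψsub ε hε
      have hc0 : 0 ≤ ψ ε := hψnonneg ε hε.le
      have hφε : 0 < φ ε := phi_pos hφ hε
      have key : ∀ δ : ℝ, 0 < δ → δ < ε / 2 → φ (ε - 2 * δ) ≤ ψ ε * φ (ε + 2 * δ) := by
        intro δ hδ hδε
        obtain ⟨N, hN⟩ := eventually_atTop.1 ((hinf.eventually (gt_mem_nhds hδ)).and
          (hE0.eventually (gt_mem_nhds hφε)))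
        obtain ⟨m₀, hm₀, n₀, hn₀, hdist⟩ := hnc N
        have hmn : m₀ ≠ n₀ := by
          rintro rfl
          rw [dist_self] at hdist
          linarith
        obtain ⟨n, m, hnN, hnm, hdm⟩ : ∃ n m : ℕ, N ≤ n ∧ n < m ∧ ε ≤ dist (s n) (s m) := by
          rcases lt_or_gt_of_ne hmn with h' | h'
          · exact ⟨m₀, n₀, hm₀, h', hdist⟩
          · exact ⟨n₀, m₀, hn₀, h', by rwa [dist_comm] at hdist⟩
        have hPm : ∃ j, n < j ∧ ε ≤ dist (s n) (s j) := ⟨m, hnm, hdm⟩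
        set m' := Nat.find hPm with hm'def
        have hnm' : n < m' := (Nat.find_spec hPm).1
        have hdm' : ε ≤ dist (s n) (s m') := (Nat.find_spec hPm).2
        have hm'pos : 0 < m' := Nat.lt_of_le_of_lt (Nat.zero_le n) hnm'
        have hm'1lt : dist (s n) (s (m' - 1)) < ε := by
          rcases eq_or_lt_of_le (Nat.le_sub_one_of_lt hnm') with h | h
          · rw [← h, dist_self]; exact hε
          · have hmin := Nat.find_min hPm (show m' - 1 < m' from Nat.sub_lt hm'pos one_pos)
            push_neg at hmin
            exact hmin h
        have hm1N : N ≤ m' - 1 := le_trans hnN (Nat.le_sub_one_of_lt hnm')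
        have hm'N : N ≤ m' := le_trans hm1N (Nat.sub_le m' 1)
        have hsm' : s m' = s ((m' - 1) + 1) := by
          rw [Nat.sub_add_cancel hm'pos]
        have hDm1 : dist (s (m' - 1)) (s m') < δ := by
          rw [hsm', hDd]
          exact (hN _ hm1N).1
        have hbu : dist (s n) (s m') < ε + δ :=
          lt_of_le_of_lt (dist_triangle (s n) (s (m' - 1)) (s m')) (by linarith)
        have hne2 : s n ≠ s m' := by
          intro h
          have h0 : dist (s n) (s m') = 0 := by rw [h, dist_self]
          linarith
        have hcc := hcontr (s n) (s m') hne2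
        simp only [MAlt, eAlt] at hcc
        rw [← hsucc n, ← hsucc m'] at hcc
        have hDn : D n < δ := (hN n hnN).1
        have hEn : E n < φ ε := (hN n hnN).2
        have hDm : D m' < δ := (hN m' hm'N).1
        have hEm : E m' < φ ε := (hN m' hm'N).2
        have hmono : ∀ t : ℝ, 0 ≤ t → t ≤ ε + 2 * δ → φ t ≤ φ (ε + 2 * δ) := fun t ht h =>
          hφ.2.1 (Set.mem_Ici.2 ht) (Set.mem_Ici.2 (by linarith)) h
        have hεe : φ ε ≤ φ (ε + 2 * δ) := hmono ε hε.le (by linarith)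
        have h1 : φ (dist (s n) (s m')) ≤ φ (ε + 2 * δ) :=
          hmono _ dist_nonneg (by linarith)
        have h2 : (φ (dist (s n) (s (n + 1))) + φ (dist (s m') (s (m' + 1)))) / 2
            ≤ φ (ε + 2 * δ) := by
          rw [hEd n, hEd m']
          linarith
        have h3 : φ (dist (s n) (s (m' + 1))) ≤ φ (ε + 2 * δ) := by
          apply hmono _ dist_nonneg
          have := dist_triangle (s n) (s m') (s (m' + 1))
          rw [hDd m'] at this
          linarith
        have hMle : max (max (φ (dist (s n) (s m')))
              ((φ (dist (s n) (s (n + 1))) + φ (dist (s m') (s (m' + 1)))) / 2))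
            (min (φ (dist (s n) (s (m' + 1)))) (φ (dist (s (n + 1)) (s m'))))
            ≤ φ (ε + 2 * δ) :=
          max_le (max_le h1 h2) (le_trans (min_le_left _ _) h3)
        have hM0 : (0:ℝ) ≤ max (max (φ (dist (s n) (s m')))
              ((φ (dist (s n) (s (n + 1))) + φ (dist (s m') (s (m' + 1)))) / 2))
            (min (φ (dist (s n) (s (m' + 1)))) (φ (dist (s (n + 1)) (s m')))) :=
          le_trans (hφ.2.2.1 _ dist_nonneg) (le_trans (le_max_left _ _) (le_max_left _ _))
        have hψbc : ψ (dist (s n) (s m')) ≤ ψ ε :=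
          hψdec (Set.mem_Ioi.2 hε) (Set.mem_Ioi.2 (hε.trans_le hdm')) hdm'
        have hup : φ (dist (s (n + 1)) (s (m' + 1))) ≤ ψ ε * φ (ε + 2 * δ) :=
          le_trans hcc (le_trans (mul_le_mul_of_nonneg_right hψbc hM0)
            (mul_le_mul_of_nonneg_left hMle hc0))
        have htri : dist (s n) (s m') ≤ D n + dist (s (n + 1)) (s (m' + 1)) + D m' := by
          have h4 := dist_triangle4 (s n) (s (n + 1)) (s (m' + 1)) (s m')
          rw [dist_comm (s (m' + 1)) (s m')] at h4
          rw [hDd n, hDd m'] at h4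
          exact h4
        have hlow : φ (ε - 2 * δ) ≤ φ (dist (s (n + 1)) (s (m' + 1))) :=
          hφ.2.1 (Set.mem_Ici.2 (by linarith)) (Set.mem_Ici.2 dist_nonneg) (by linarith)
        linarith
      -- pass to the limit δ → 0⁺
      have hIoo : Set.Ioo (0:ℝ) (ε / 2) ∈ 𝓝[>] (0:ℝ) :=
        Ioo_mem_nhdsGT_of_mem (Set.mem_Ico.2 ⟨le_rfl, half_pos hε⟩)
      have hlim1 : Tendsto (fun δ : ℝ => φ (ε - 2 * δ)) (𝓝[>] (0:ℝ)) (𝓝 (φ ε)) := by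
        have ht0 : Tendsto (fun δ : ℝ => ε - 2 * δ) (𝓝 (0:ℝ)) (𝓝 ε) := by
          have : Tendsto (fun δ : ℝ => ε - 2 * δ) (𝓝 (0:ℝ)) (𝓝 (ε - 2 * 0)) :=
            (tendsto_const_nhds.sub ((continuous_const.mul continuous_id).tendsto 0))
          simpa using this
        have ht : Tendsto (fun δ : ℝ => ε - 2 * δ) (𝓝[>] (0:ℝ)) (𝓝[Set.Ici 0] ε) := by
          apply tendsto_nhdsWithin_of_tendsto_nhds_of_eventually_within
          · exact ht0.mono_left nhdsWithin_le_nhds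
          · filter_upwards [hIoo] with δ hδ
            exact Set.mem_Ici.2 (by nlinarith [hδ.1, hδ.2])
        exact (hφ.1 ε (Set.mem_Ici.2 hε.le)).tendsto.comp ht
      have hlim2 : Tendsto (fun δ : ℝ => ψ ε * φ (ε + 2 * δ)) (𝓝[>] (0:ℝ)) (𝓝 (ψ ε * φ ε)) := by
        have ht0 : Tendsto (fun δ : ℝ => ε + 2 * δ) (𝓝 (0:ℝ)) (𝓝 ε) := by
          have : Tendsto (fun δ : ℝ => ε + 2 * δ) (𝓝 (0:ℝ)) (𝓝 (ε + 2 * 0)) :=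
            (tendsto_const_nhds.add ((continuous_const.mul continuous_id).tendsto 0))
          simpa using this
        have ht : Tendsto (fun δ : ℝ => ε + 2 * δ) (𝓝[>] (0:ℝ)) (𝓝[Set.Ici 0] ε) := by
          apply tendsto_nhdsWithin_of_tendsto_nhds_of_eventually_within
          · exact ht0.mono_left nhdsWithin_le_nhds
          · filter_upwards [self_mem_nhdsWithin] with δ hδ
            have : (0:ℝ) < δ := hδ
            exact Set.mem_Ici.2 (by linarith)
        exact tendsto_const_nhds.mul ((hφ.1 ε (Set.mem_Ici.2 hε.le)).tendsto.comp ht)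
      have hev : ∀ᶠ δ in 𝓝[>] (0:ℝ), φ (ε - 2 * δ) ≤ ψ ε * φ (ε + 2 * δ) := by
        filter_upwards [hIoo] with δ hδ
        exact key δ hδ.1 hδ.2
      have hfinal : φ ε ≤ ψ ε * φ ε := le_of_tendsto_of_tendsto hlim1 hlim2 hev
      nlinarith
    obtain ⟨z, hz⟩ := cauchySeq_tendsto_of_complete hcauchy
    refine ⟨z, ?_, hz⟩
    by_contra hzz
    have hρ : 0 < dist z (T z) := dist_pos.2 hzz
    have hη : 0 < φ (dist z (T z)) := phi_pos hφ hρ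
    obtain ⟨δ₁, hδ₁, hδ₁p⟩ := Metric.continuousWithinAt_iff.1 (hφ.1 0 Set.self_mem_Ici)
      (φ (dist z (T z)) / 4) (by linarith)
    obtain ⟨δ₂, hδ₂, hδ₂p⟩ := Metric.continuousWithinAt_iff.1
      (hφ.1 (dist z (T z)) (Set.mem_Ici.2 hρ.le)) (3 * φ (dist z (T z)) / 8) (by linarith)
    set ρ := dist z (T z) with hρdef
    set δ := min (min δ₁ δ₂) ρ / 2 with hδdef
    have hδpos : 0 < δ := by
      have : 0 < min (min δ₁ δ₂) ρ := lt_min (lt_min hδ₁ hδ₂) hρ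
      linarith
    have hδρ : δ < ρ := by
      have : min (min δ₁ δ₂) ρ ≤ ρ := min_le_right _ _
      rw [hδdef]; linarith
    have hδ1 : δ < δ₁ := by
      have h5 : min (min δ₁ δ₂) ρ ≤ δ₁ := le_trans (min_le_left _ _) (min_le_left _ _)
      rw [hδdef]; linarith
    have hδ2 : δ < δ₂ := by
      have h5 : min (min δ₁ δ₂) ρ ≤ δ₂ := le_trans (min_le_left _ _) (min_le_right _ _)
      rw [hδdef]; linarith
    have hφδ : φ δ < φ ρ / 4 := by
      have h6 := hδ₁p (Set.mem_Ici.2 hδpos.le)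
        (by rw [Real.dist_eq, sub_zero, abs_of_pos hδpos]; exact hδ1)
      rwa [Real.dist_eq, hφ0, sub_zero, abs_of_nonneg (hφ.2.2.1 δ hδpos.le)] at h6
    have hφρδ : 5 * φ ρ / 8 < φ (ρ - δ) := by
      have h7 := hδ₂p (Set.mem_Ici.2 (by linarith : (0:ℝ) ≤ ρ - δ))
        (by rw [Real.dist_eq, sub_sub_cancel_left, abs_neg, abs_of_pos hδpos]; exact hδ2)
      rw [Real.dist_eq] at h7
      have h8 := (abs_lt.1 h7).1
      linarith
    obtain ⟨N, hNs⟩ := Metric.tendsto_atTop.1 hz (min (δ / 2) ρ) (lt_min (by linarith) hρ)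
    have hsN : dist (s N) z < min (δ / 2) ρ := hNs N le_rfl
    have hsN1 : dist (s (N + 1)) z < min (δ / 2) ρ := hNs (N + 1) (Nat.le_succ N)
    have hneN : s N ≠ z := by
      intro h
      have h9 : s (N + 1) = T z := by rw [hsucc, h]
      rw [h9, dist_comm] at hsN1
      exact absurd hsN1 (not_lt.2 (min_le_right _ _))
    have hb : dist (s N) z < δ / 2 := lt_of_lt_of_le hsN (min_le_left _ _)
    have hb1 : dist (s (N + 1)) z < δ / 2 := lt_of_lt_of_le hsN1 (min_le_left _ _)
    have hDN : dist (s N) (s (N + 1)) < δ := by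
      have := dist_triangle (s N) z (s (N + 1))
      rw [dist_comm z (s (N + 1))] at this
      linarith
    have hcc := hcontr (s N) z hneN
    simp only [MAlt, eAlt] at hcc
    rw [← hsucc N] at hcc
    have hmono : ∀ t : ℝ, 0 ≤ t → t ≤ δ → φ t ≤ φ δ := fun t ht h =>
      hφ.2.1 (Set.mem_Ici.2 ht) (Set.mem_Ici.2 hδpos.le) h
    have p1 : φ (dist (s N) z) < φ ρ / 4 :=
      lt_of_le_of_lt (hmono _ dist_nonneg (by linarith)) hφδ
    have p2 : φ (dist (s N) (s (N + 1))) < φ ρ / 4 :=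
      lt_of_le_of_lt (hmono _ dist_nonneg hDN.le) hφδ
    have p3 : φ (dist (s (N + 1)) z) < φ ρ / 4 :=
      lt_of_le_of_lt (hmono _ dist_nonneg (by linarith)) hφδ
    have hMlt : max (max (φ (dist (s N) z)) ((φ (dist (s N) (s (N + 1))) + φ (dist z (T z))) / 2))
        (min (φ (dist (s N) (T z))) (φ (dist (s (N + 1)) z))) < 5 * φ ρ / 8 := by
      apply max_lt (max_lt (by linarith) (by rw [← hρdef]; linarith))
      exact lt_of_le_of_lt (min_le_right _ _) (by linarith)
    have hM0 : (0:ℝ) ≤ max (max (φ (dist (s N) z))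
        ((φ (dist (s N) (s (N + 1))) + φ (dist z (T z))) / 2))
        (min (φ (dist (s N) (T z))) (φ (dist (s (N + 1)) z))) :=
      le_trans (hφ.2.2.1 _ dist_nonneg) (le_trans (le_max_left _ _) (le_max_left _ _))
    have hψN : ψ (dist (s N) z) ≤ 1 := (hψsub _ (dist_pos.2 hneN)).le
    have hup : φ (dist (s (N + 1)) (T z)) ≤ max (max (φ (dist (s N) z))
        ((φ (dist (s N) (s (N + 1))) + φ (dist z (T z))) / 2))
        (min (φ (dist (s N) (T z))) (φ (dist (s (N + 1)) z))) :=
      le_trans hcc (mul_le_of_le_one_left hM0 hψN)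
    have hlowd : ρ - δ ≤ dist (s (N + 1)) (T z) := by
      have := dist_triangle z (s (N + 1)) (T z)
      rw [dist_comm z (s (N + 1))] at this
      rw [hρdef]
      linarith
    have hlow : φ (ρ - δ) ≤ φ (dist (s (N + 1)) (T z)) :=
      hφ.2.1 (Set.mem_Ici.2 (by linarith)) (Set.mem_Ici.2 dist_nonneg) hlowd
    linarith

/-- **Theorem 3.** Let `(X,d)` be complete, `φ` an altering function, and `ψ`
strictly subunitary and decreasing on `(0,∞)`. If `T` is `(d,e;M;ψ)`-contractive,
then `T` is a globally strong Picard operator: `Fix(T)` is a singleton `{z}`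
and every orbit `Tⁿx` converges to `z`. -/
theorem altering_contraction_decreasing_globally_strong_picard {X : Type*}
    [MetricSpace X] [CompleteSpace X] [Nonempty X]
    (T : X → X) (φ ψ : ℝ → ℝ) (hφ : IsAltering φ)
    (hψnonneg : ∀ s, 0 ≤ s → 0 ≤ ψ s)
    (hψsub : StrictlySubunitary ψ) (hψdec : AntitoneOn ψ (Set.Ioi 0))
    (hcontr : ∀ x y : X, x ≠ y → eAlt φ (T x) (T y) ≤ ψ (dist x y) * MAlt φ T x y) :
    ∃ z : X, z = T z ∧ (∀ y : X, y = T y → y = z) ∧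
      ∀ x : X, Tendsto (fun n : ℕ => T^[n] x) atTop (𝓝 z) := by
  obtain ⟨z, hzfix, hztend⟩ :=
    orbit_converges T hφ hψnonneg hψsub hψdec hcontr (Classical.arbitrary X)
  refine ⟨z, hzfix, fun y hy => fixed_unique T hφ hψsub hcontr hy hzfix, fun x => ?_⟩
  obtain ⟨z', hz'fix, hz'tend⟩ := orbit_converges T hφ hψnonneg hψsub hψdec hcontr x
  rwa [fixed_unique T hφ hψsub hcontr hz'fix hzfix] at hz'tend
end

section
/- Let (X,d) be a complete metric space, φ : [0,∞) → [0,∞) an altering function, and e(x,y) = φ(d(x,y)). Let a, b, c : [0,∞) → [0,∞) be functions such that ψ := a + 2b + c is strictly subunitary on (0,∞) and right Boyd-Wong on (0,∞). Suppose T : X → X satisfies e(Tx,Ty) ≤ a(d(x,y))·e(x,y) + b(d(x,y))·[e(x,Tx)+e(y,Ty)] + c(d(x,y))·min{e(x,Ty), e(Tx,y)} for all x,y ∈ X with x ≠ y. Then T is a globally strong Picard operator (modulo d): Fix(T) is a singleton {z}, and for each x ∈ X the sequence (Tⁿx; n ≥ 0) converges in (X,d) to z. -/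
/-!
Every comparison goes through `e(Tx,Ty) ≤ ψ(d(x,y)) · M(x,y)`, where `ψ = a + 2b + c` and `M` is
the maximum of `e(x,y)`, the mean of `e(x,Tx)` and `e(y,Ty)`, and the smaller cross term.
Along an orbit this makes the steps `d(Tⁿx, Tⁿ⁺¹x)` decrease, and their limit is `0`: a positive
limit `δ` would give `φ(δ) ≤ K φ(δ)` with `K < 1`, by the right Boyd–Wong condition at `δ`. The same
limiting argument, applied to the pairs of indices extracted from a non-Cauchy sequence, shows
that the orbit is Cauchy. At its limit `z`, the inequality for `(Tⁿx, z)` gives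
`e(z,Tz) ≤ e(z,Tz)/2` in the limit, so `z` is fixed; two fixed points `y ≠ w` would give
`φ(d) ≤ ψ(d) φ(d)`.
-/

open Filter Topology

namespace IsAltering

variable {φ : ℝ → ℝ} {s t : ℝ}

theorem map_zero (hφ : IsAltering φ) : φ 0 = 0 :=
  (hφ.2.2.2 0 le_rfl).2 rfl

theorem nonneg (hφ : IsAltering φ) (ht : 0 ≤ t) : 0 ≤ φ t :=
  hφ.2.2.1 t ht

theorem pos (hφ : IsAltering φ) (ht : 0 < t) : 0 < φ t :=
  (hφ.nonneg ht.le).lt_of_ne fun h => ht.ne' ((hφ.2.2.2 t ht.le).1 h.symm)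

theorem mono (hφ : IsAltering φ) (hs : 0 ≤ s) (hst : s ≤ t) : φ s ≤ φ t :=
  hφ.2.1 hs (hs.trans hst) hst

theorem not_le_mul (hφ : IsAltering φ) (ht : 0 < t) {K : ℝ} (hK : K < 1) :
    ¬φ t ≤ K * φ t := by
  have := hφ.pos ht
  intro h
  nlinarith

theorem continuousAt (hφ : IsAltering φ) (ht : 0 < t) : ContinuousAt φ t :=
  hφ.1.continuousAt (Ici_mem_nhds ht)

theorem tendsto_comp {ι : Type*} {l : Filter ι} {f : ι → ℝ} (hφ : IsAltering φ)
    (hf : Tendsto f l (𝓝 t)) (ht : 0 ≤ t) (hf0 : ∀ i, 0 ≤ f i) :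
    Tendsto (fun i => φ (f i)) l (𝓝 (φ t)) :=
  (hφ.1.continuousWithinAt ht).tendsto.comp
    (tendsto_nhdsWithin_iff.2 ⟨hf, Eventually.of_forall hf0⟩)

end IsAltering

theorem RightBoydWong.exists_eventually_le {ψ : ℝ → ℝ} (hbw : RightBoydWong ψ)
    (hsub : StrictlySubunitary ψ) {ε : ℝ} (hε : 0 < ε) :
    ∃ K < 1, ∀ᶠ t in 𝓝[≥] ε, ψ t ≤ K := by
  have hL := hbw ε hε
  have hbdd : IsBoundedUnder (· ≤ ·) (𝓝[>] ε) ψ :=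
    ⟨1, eventually_map.2 <| eventually_nhdsWithin_of_forall fun t ht =>
      (hsub t (hε.trans ht)).le⟩
  have hlt : ∀ᶠ t in 𝓝[>] ε, ψ t < (limsup ψ (𝓝[>] ε) + 1) / 2 :=
    eventually_lt_of_limsup_lt (by linarith) hbdd
  refine ⟨max (ψ ε) ((limsup ψ (𝓝[>] ε) + 1) / 2), max_lt (hsub ε hε) (by linarith), ?_⟩
  rw [← nhdsGT_sup_nhdsWithin_singleton, eventually_sup]
  exact ⟨hlt.mono fun t ht => ht.le.trans (le_max_right _ _),
    eventually_nhdsWithin_of_forall fun t ht => (Set.mem_singleton_iff.1 ht) ▸ le_max_left _ _⟩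

theorem IsAltering.false_of_eventually_le_mul {φ ψ : ℝ → ℝ} (hφ : IsAltering φ)
    (hbw : RightBoydWong ψ) (hsub : StrictlySubunitary ψ) {ε : ℝ} (hε : 0 < ε)
    {s t t' : ℕ → ℝ} (hs : Tendsto s atTop (𝓝[≥] ε)) (ht : Tendsto t atTop (𝓝 ε))
    (ht' : Tendsto t' atTop (𝓝 ε)) (h : ∀ᶠ k in atTop, φ (t k) ≤ ψ (s k) * φ (t' k)) :
    False := by
  obtain ⟨K, hK, hψK⟩ := hbw.exists_eventually_le hsub hε
  have hle : ∀ᶠ k in atTop, φ (t k) ≤ K * φ (t' k) := by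
    filter_upwards [h, hs.eventually hψK, ht'.eventually (lt_mem_nhds hε)] with k hk hψ ht'k
    exact hk.trans (mul_le_mul_of_nonneg_right hψ (hφ.nonneg ht'k.le))
  have hcont := (hφ.continuousAt hε).tendsto
  exact hφ.not_le_mul hε hK <|
    le_of_tendsto_of_tendsto (hcont.comp ht) ((hcont.comp ht').const_mul K) hle

section Sequences

variable {X : Type*} [PseudoMetricSpace X]

theorem Filter.Tendsto.dist_of_dist_tendsto_zero {ι : Type*} {l : Filter ι} {p p' q q' : ι → X}
    {ε : ℝ} (h : Tendsto (fun i => dist (p i) (q i)) l (𝓝 ε))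
    (hp : Tendsto (fun i => dist (p i) (p' i)) l (𝓝 0))
    (hq : Tendsto (fun i => dist (q i) (q' i)) l (𝓝 0)) :
    Tendsto (fun i => dist (p' i) (q' i)) l (𝓝 ε) :=
  h.congr_dist <| squeeze_zero (fun _ => dist_nonneg)
    (fun i => dist_dist_dist_le (p i) (q i) (p' i) (q' i)) (by simpa using hp.add hq)

/-- `m k` is the first index after `k` at which `u` leaves the `ε`-ball around `u k`. -/
theorem exists_tendsto_dist_of_not_cauchySeq {u : ℕ → X} (hu : ¬CauchySeq u)
    (hD : Tendsto (fun n => dist (u n) (u (n + 1))) atTop (𝓝 0)) :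
    ∃ ε > 0, ∃ m : ℕ → ℕ, Tendsto m atTop atTop ∧ (∀ k, ε ≤ dist (u k) (u (m k))) ∧
      Tendsto (fun k => dist (u k) (u (m k))) atTop (𝓝 ε) := by
  classical
  rw [Metric.cauchySeq_iff'] at hu
  push Not at hu
  obtain ⟨ε, hε, hfar⟩ := hu
  have hex : ∀ k, ∃ j, ε ≤ dist (u k) (u (k + j)) := fun k => by
    obtain ⟨n, hn, h⟩ := hfar k
    exact ⟨n - k, by rwa [Nat.add_sub_cancel' hn, dist_comm]⟩
  have hexit : ∀ k, ∃ i, dist (u k) (u (k + i)) < ε ∧ ε ≤ dist (u k) (u (k + i + 1)) := by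
    intro k
    have hspec := Nat.find_spec (hex k)
    obtain ⟨i, hi⟩ := Nat.exists_eq_succ_of_ne_zero (n := Nat.find (hex k)) fun h0 => by
      rw [h0, add_zero, dist_self] at hspec
      linarith
    refine ⟨i, ?_, by rwa [hi] at hspec⟩
    simpa using Nat.find_min (hex k) (hi ▸ Nat.lt_succ_self i)
  choose i hin hout using hexit
  have hDi : Tendsto (fun k => dist (u (k + i k)) (u (k + i k + 1))) atTop (𝓝 0) :=
    hD.comp (tendsto_atTop_mono (fun k => Nat.le_add_right k (i k)) tendsto_id)
  refine ⟨ε, hε, fun k => k + i k + 1,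
    tendsto_atTop_mono (fun k => (Nat.le_add_right k (i k)).trans (Nat.le_succ _)) tendsto_id,
    hout, tendsto_of_tendsto_of_tendsto_of_le_of_le tendsto_const_nhds
      (by simpa using hDi.const_add ε) hout fun k => ?_⟩
  calc dist (u k) (u (k + i k + 1))
      ≤ dist (u k) (u (k + i k)) + dist (u (k + i k)) (u (k + i k + 1)) := dist_triangle _ _ _
    _ ≤ ε + dist (u (k + i k)) (u (k + i k + 1)) := by linarith [hin k]

end Sequences

section MAlt

variable {X : Type*} [MetricSpace X] {φ : ℝ → ℝ} {T : X → X} {x y : X} {B : ℝ}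

theorem MAlt_le (h₁ : eAlt φ x y ≤ B) (h₂ : (eAlt φ x (T x) + eAlt φ y (T y)) / 2 ≤ B)
    (h₃ : min (eAlt φ x (T y)) (eAlt φ (T x) y) ≤ B) : MAlt φ T x y ≤ B :=
  max_le (max_le h₁ h₂) h₃

theorem MAlt_le_of_le (h₁ : eAlt φ x y ≤ B) (h₂ : eAlt φ x (T x) ≤ B) (h₃ : eAlt φ y (T y) ≤ B)
    (h₄ : min (eAlt φ x (T y)) (eAlt φ (T x) y) ≤ B) : MAlt φ T x y ≤ B :=
  MAlt_le h₁ (by linarith) h₄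

end MAlt

structure IsABCContractive {X : Type*} [MetricSpace X] (φ a b c : ℝ → ℝ) (T : X → X) : Prop where
  altering : IsAltering φ
  a_nonneg : ∀ s, 0 ≤ s → 0 ≤ a s
  b_nonneg : ∀ s, 0 ≤ s → 0 ≤ b s
  c_nonneg : ∀ s, 0 ≤ s → 0 ≤ c s
  subunitary : StrictlySubunitary (fun s => a s + 2 * b s + c s)
  contractive : ∀ x y : X, x ≠ y →
    eAlt φ (T x) (T y) ≤ a (dist x y) * eAlt φ x y
      + b (dist x y) * (eAlt φ x (T x) + eAlt φ y (T y))
      + c (dist x y) * min (eAlt φ x (T y)) (eAlt φ (T x) y)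

namespace IsABCContractive

variable {X : Type*} [MetricSpace X] {φ a b c : ℝ → ℝ} {T : X → X} {x y : X}

theorem eAlt_nonneg (hT : IsABCContractive φ a b c T) (x y : X) : 0 ≤ eAlt φ x y :=
  hT.altering.nonneg dist_nonneg

theorem rate_nonneg (hT : IsABCContractive φ a b c T) {s : ℝ} (hs : 0 ≤ s) :
    0 ≤ a s + 2 * b s + c s := by
  linarith [hT.a_nonneg s hs, hT.b_nonneg s hs, hT.c_nonneg s hs]

theorem eAlt_map_le_mul_MAlt (hT : IsABCContractive φ a b c T) (hxy : x ≠ y) :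
    eAlt φ (T x) (T y) ≤
      (a (dist x y) + 2 * b (dist x y) + c (dist x y)) * MAlt φ T x y := by
  have hM₁ : eAlt φ x y ≤ MAlt φ T x y := (le_max_left _ _).trans (le_max_left _ _)
  have hM₂ : (eAlt φ x (T x) + eAlt φ y (T y)) / 2 ≤ MAlt φ T x y :=
    (le_max_right _ _).trans (le_max_left _ _)
  have hM₃ : min (eAlt φ x (T y)) (eAlt φ (T x) y) ≤ MAlt φ T x y := le_max_right _ _
  have ha := hT.a_nonneg _ (dist_nonneg (x := x) (y := y))
  have hb := hT.b_nonneg _ (dist_nonneg (x := x) (y := y))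
  have hc := hT.c_nonneg _ (dist_nonneg (x := x) (y := y))
  calc eAlt φ (T x) (T y)
      ≤ a (dist x y) * eAlt φ x y + 2 * b (dist x y) * ((eAlt φ x (T x) + eAlt φ y (T y)) / 2)
        + c (dist x y) * min (eAlt φ x (T y)) (eAlt φ (T x) y) := by
        linarith [hT.contractive x y hxy]
    _ ≤ a (dist x y) * MAlt φ T x y + 2 * b (dist x y) * MAlt φ T x y
        + c (dist x y) * MAlt φ T x y := by gcongr
    _ = _ := by ring

theorem eAlt_map_le_MAlt (hT : IsABCContractive φ a b c T) (hxy : x ≠ y) :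
    eAlt φ (T x) (T y) ≤ MAlt φ T x y := by
  have hM : 0 ≤ MAlt φ T x y :=
    (hT.eAlt_nonneg x y).trans ((le_max_left _ _).trans (le_max_left _ _))
  have hψ := hT.subunitary _ (dist_pos.2 hxy)
  nlinarith [hT.eAlt_map_le_mul_MAlt hxy]

theorem eq_of_isFixedPt (hT : IsABCContractive φ a b c T) (hx : Function.IsFixedPt T x)
    (hy : Function.IsFixedPt T y) : x = y := by
  by_contra hxy
  have hd := dist_pos.2 hxy
  have hM : MAlt φ T x y ≤ eAlt φ x y := by
    have h₀ : ∀ z : X, Function.IsFixedPt T z → eAlt φ z (T z) ≤ eAlt φ x y := fun z hz => by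
      rw [hz.eq, eAlt, dist_self, hT.altering.map_zero]
      exact hT.eAlt_nonneg x y
    refine MAlt_le_of_le le_rfl (h₀ x hx) (h₀ y hy) ?_
    rw [hy.eq]
    exact min_le_left _ _
  refine hT.altering.not_le_mul hd (hT.subunitary _ hd) ?_
  have h := hT.eAlt_map_le_mul_MAlt hxy
  rw [hx.eq, hy.eq] at h
  exact h.trans (mul_le_mul_of_nonneg_left hM (hT.rate_nonneg hd.le))

theorem MAlt_map_le (hT : IsABCContractive φ a b c T) (p : X) :
    MAlt φ T p (T p) ≤ max (eAlt φ p (T p)) (eAlt φ (T p) (T (T p))) := by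
  refine MAlt_le_of_le (le_max_left _ _) (le_max_left _ _) (le_max_right _ _) ?_
  calc min (eAlt φ p (T (T p))) (eAlt φ (T p) (T p)) ≤ eAlt φ (T p) (T p) := min_le_right _ _
    _ = 0 := by rw [eAlt, dist_self, hT.altering.map_zero]
    _ ≤ _ := (hT.eAlt_nonneg _ _).trans (le_max_left _ _)

theorem dist_map_map_le (hT : IsABCContractive φ a b c T) (p : X) :
    dist (T p) (T (T p)) ≤ dist p (T p) := by
  by_cases hp : p = T p
  · simp [← hp]
  by_contra! hlt
  have hs := dist_pos.2 hp
  have hmax : max (eAlt φ p (T p)) (eAlt φ (T p) (T (T p))) = eAlt φ (T p) (T (T p)) :=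
    max_eq_right (hT.altering.mono hs.le hlt.le)
  refine hT.altering.not_le_mul (hs.trans hlt) (hT.subunitary _ hs) ?_
  calc eAlt φ (T p) (T (T p)) ≤ _ * MAlt φ T p (T p) := hT.eAlt_map_le_mul_MAlt hp
    _ ≤ _ * eAlt φ (T p) (T (T p)) :=
      mul_le_mul_of_nonneg_left (hmax ▸ hT.MAlt_map_le p) (hT.rate_nonneg hs.le)

theorem eAlt_map_map_le_mul (hT : IsABCContractive φ a b c T) (p : X) :
    eAlt φ (T p) (T (T p)) ≤
      (a (dist p (T p)) + 2 * b (dist p (T p)) + c (dist p (T p))) * eAlt φ p (T p) := by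
  by_cases hp : p = T p
  · simp [← hp, eAlt, hT.altering.map_zero]
  have hmax : max (eAlt φ p (T p)) (eAlt φ (T p) (T (T p))) = eAlt φ p (T p) :=
    max_eq_left (hT.altering.mono dist_nonneg (hT.dist_map_map_le p))
  exact (hT.eAlt_map_le_mul_MAlt hp).trans
    (mul_le_mul_of_nonneg_left (hmax ▸ hT.MAlt_map_le p) (hT.rate_nonneg dist_nonneg))

theorem tendsto_dist_iterate_succ (hT : IsABCContractive φ a b c T)
    (hbw : RightBoydWong (fun s => a s + 2 * b s + c s)) (x : X) :
    Tendsto (fun n => dist (T^[n] x) (T^[n + 1] x)) atTop (𝓝 0) := by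
  set D := fun n => dist (T^[n] x) (T^[n + 1] x)
  have hanti : Antitone D := antitone_nat_of_succ_le fun n => by
    simpa only [D, Function.iterate_succ_apply'] using hT.dist_map_map_le (T^[n] x)
  have hbdd : BddBelow (Set.range D) := ⟨0, by rintro _ ⟨n, rfl⟩; exact dist_nonneg⟩
  have hδ := tendsto_atTop_ciInf hanti hbdd
  rcases (le_ciInf fun n => dist_nonneg : (0 : ℝ) ≤ ⨅ n, D n).eq_or_lt with h0 | hpos
  · rwa [← h0] at hδ
  exact (hT.altering.false_of_eventually_le_mul hbw hT.subunitary hpos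
    (tendsto_nhdsWithin_iff.2 ⟨hδ, .of_forall (ciInf_le hbdd)⟩)
    (hδ.comp (tendsto_add_atTop_nat 1)) hδ (.of_forall fun n => by
      simpa only [D, eAlt, Function.comp_apply, Function.iterate_succ_apply'] using
        hT.eAlt_map_map_le_mul (T^[n] x))).elim

theorem cauchySeq_iterate (hT : IsABCContractive φ a b c T)
    (hbw : RightBoydWong (fun s => a s + 2 * b s + c s)) (x : X) :
    CauchySeq fun n => T^[n] x := by
  set u := fun n => T^[n] x
  have hu : ∀ n, u (n + 1) = T (u n) := fun n => Function.iterate_succ_apply' T n x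
  have hD : Tendsto (fun n => dist (u n) (u (n + 1))) atTop (𝓝 0) :=
    hT.tendsto_dist_iterate_succ hbw x
  by_contra hu'
  obtain ⟨ε, hε, m, hm, hge, hr⟩ := exists_tendsto_dist_of_not_cauchySeq hu' hD
  -- `B k` dominates every distance that enters `M(u k, u (m k))`
  set B := fun k => dist (u k) (u (m k)) + dist (u k) (u (k + 1)) + dist (u (m k)) (u (m k + 1))
  have hB : Tendsto B atTop (𝓝 ε) := by simpa using (hr.add hD).add (hD.comp hm)
  refine hT.altering.false_of_eventually_le_mul hbw hT.subunitary hε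
    (tendsto_nhdsWithin_iff.2 ⟨hr, .of_forall hge⟩)
    (hr.dist_of_dist_tendsto_zero hD (hD.comp hm)) hB (.of_forall fun k => ?_)
  have hne : u k ≠ u (m k) := dist_pos.1 (hε.trans_le (hge k))
  have hle : ∀ {s}, 0 ≤ s → s ≤ B k → φ s ≤ φ (B k) := hT.altering.mono
  have hd₁ : 0 ≤ dist (u k) (u (k + 1)) := dist_nonneg
  have hd₂ : 0 ≤ dist (u (m k)) (u (m k + 1)) := dist_nonneg
  have hd₃ : 0 ≤ dist (u k) (u (m k)) := dist_nonneg
  have hd₄ := dist_triangle (u k) (u (m k)) (u (m k + 1))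
  simp only [hu] at hd₁ hd₂ hd₄ ⊢
  refine (hT.eAlt_map_le_mul_MAlt hne).trans (mul_le_mul_of_nonneg_left
    (MAlt_le_of_le ?_ ?_ ?_ ((min_le_left _ _).trans ?_)) (hT.rate_nonneg dist_nonneg)) <;>
  refine hle dist_nonneg ?_ <;> simp only [B, hu] <;> linarith

theorem isFixedPt_of_tendsto (hT : IsABCContractive φ a b c T)
    (hbw : RightBoydWong (fun s => a s + 2 * b s + c s)) {x z : X}
    (hz : Tendsto (fun n => T^[n] x) atTop (𝓝 z)) : Function.IsFixedPt T z := by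
  set u := fun n => T^[n] x
  have hu : ∀ n, u (n + 1) = T (u n) := fun n => Function.iterate_succ_apply' T n x
  have hz₁ : Tendsto (fun n => u (n + 1)) atTop (𝓝 z) := hz.comp (tendsto_add_atTop_nat 1)
  have hD : Tendsto (fun n => dist (u n) (u (n + 1))) atTop (𝓝 0) :=
    hT.tendsto_dist_iterate_succ hbw x
  by_cases hfreq : ∃ᶠ n in atTop, u n = z
  · exact tendsto_nhds_unique_of_frequently_eq tendsto_const_nhds hz₁
      (hfreq.mono fun n hn => by rw [hu, hn])
  rw [not_frequently] at hfreq
  by_contra hzT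
  have hφ := hT.altering
  have he : ∀ {v w : ℕ → X}, Tendsto (fun n => dist (v n) (w n)) atTop (𝓝 0) →
      Tendsto (fun n => eAlt φ (v n) (w n)) atTop (𝓝 0) := fun h => by
    simpa only [eAlt, hφ.map_zero] using hφ.tendsto_comp h le_rfl fun _ => dist_nonneg
  have hlim := ((he (tendsto_iff_dist_tendsto_zero.1 hz)).add
    (((he hD).add (tendsto_const_nhds (x := eAlt φ z (T z)))).div_const 2)).add
    (he (tendsto_iff_dist_tendsto_zero.1 hz₁))
  -- `e(T u_n, T z) ≤ M(u_n, z)`, whose limit is at most `e(z, T z) / 2`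
  refine hφ.not_le_mul (dist_pos.2 (Ne.symm hzT)) (by norm_num : (1 / 2 : ℝ) < 1)
    (le_of_tendsto_of_tendsto (hφ.tendsto_comp (hz₁.dist tendsto_const_nhds) dist_nonneg
      fun _ => dist_nonneg) (by convert hlim using 2; simp only [eAlt]; ring) ?_)
  filter_upwards [hfreq] with n hn
  have h₁ := hT.eAlt_nonneg (u n) z
  have h₂ := hT.eAlt_nonneg (u n) (u (n + 1))
  have h₃ := hT.eAlt_nonneg z (T z)
  have h₄ := hT.eAlt_nonneg (u (n + 1)) z
  simp only [hu] at h₂ h₄ ⊢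
  exact (hT.eAlt_map_le_MAlt hn).trans
    (MAlt_le (by linarith) (by linarith) ((min_le_right _ _).trans (by linarith)))

end IsABCContractive

/-- **Theorem 4.** Let `(X,d)` be complete, `φ` an altering function, and
`a, b, c : [0,∞) → [0,∞)` with `ψ := a + 2b + c` strictly subunitary and right
Boyd–Wong on `(0,∞)`. If `T` is `(d,e;a,b,c)`-contractive, then `T` is a
globally strong Picard operator: `Fix(T)` is a singleton `{z}` and every orbit
`Tⁿx` converges to `z`. -/
theorem abc_contraction_globally_strong_picard {X : Type*}
    [MetricSpace X] [CompleteSpace X] [Nonempty X]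
    (T : X → X) (φ a b c : ℝ → ℝ) (hφ : IsAltering φ)
    (ha : ∀ s, 0 ≤ s → 0 ≤ a s) (hb : ∀ s, 0 ≤ s → 0 ≤ b s)
    (hc : ∀ s, 0 ≤ s → 0 ≤ c s)
    (hψsub : StrictlySubunitary (fun s => a s + 2 * b s + c s))
    (hψbw : RightBoydWong (fun s => a s + 2 * b s + c s))
    (hcontr : ∀ x y : X, x ≠ y →
      eAlt φ (T x) (T y) ≤ a (dist x y) * eAlt φ x y
        + b (dist x y) * (eAlt φ x (T x) + eAlt φ y (T y))
        + c (dist x y) * min (eAlt φ x (T y)) (eAlt φ (T x) y)) :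
    ∃ z : X, z = T z ∧ (∀ y : X, y = T y → y = z) ∧
      ∀ x : X, Tendsto (fun n : ℕ => T^[n] x) atTop (𝓝 z) := by
  have hT : IsABCContractive φ a b c T := ⟨hφ, ha, hb, hc, hψsub, hcontr⟩
  have horbit : ∀ x, ∃ z, Function.IsFixedPt T z ∧ Tendsto (fun n => T^[n] x) atTop (𝓝 z) :=
    fun x => (cauchySeq_tendsto_of_complete (hT.cauchySeq_iterate hψbw x)).imp
      fun _ hz => ⟨hT.isFixedPt_of_tendsto hψbw hz, hz⟩
  obtain ⟨z, hz, -⟩ := horbit (Classical.arbitrary X)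
  refine ⟨z, hz.eq.symm, fun y hy => hT.eq_of_isFixedPt hy.symm hz, fun x => ?_⟩
  obtain ⟨z', hz', hx⟩ := horbit x
  rwa [hT.eq_of_isFixedPt hz' hz] at hx
end

section
/- Let (X,d) be a complete metric space, φ : [0,∞) → [0,∞) an altering function, and e(x,y) = φ(d(x,y)). Let a, b, c : [0,∞) → [0,∞) each be decreasing on (0,∞) and such that a(s) + 2b(s) + c(s) < 1 for all s > 0. Suppose T : X → X satisfies e(Tx,Ty) ≤ a(d(x,y))·e(x,y) + b(d(x,y))·[e(x,Tx)+e(y,Ty)] + c(d(x,y))·min{e(x,Ty), e(Tx,y)} for all x,y ∈ X with x ≠ y. Then T is a globally strong Picard operator (modulo d): Fix(T) is a singleton {z}, and for each x ∈ X the sequence (Tⁿx; n ≥ 0) converges in (X,d) to z. -/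
open Filter Topology

/-- **Khan–Swaleh–Sessa's theorem.** Let `(X,d)` be complete, `φ` an altering
function, and `a, b, c : [0,∞) → [0,∞)` each decreasing on `(0,∞)` with
`a(s) + 2b(s) + c(s) < 1` for all `s > 0`. If `T` is `(d,e;a,b,c)`-contractive,
then `T` is a globally strong Picard operator: `Fix(T)` is a singleton `{z}`
and every orbit `Tⁿx` converges to `z`. -/
theorem khan_swaleh_sessa {X : Type*}
    [MetricSpace X] [CompleteSpace X] [Nonempty X]
    (T : X → X) (φ a b c : ℝ → ℝ) (hφ : IsAltering φ)
    (ha0 : ∀ s, 0 ≤ s → 0 ≤ a s) (hb0 : ∀ s, 0 ≤ s → 0 ≤ b s)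
    (hc0 : ∀ s, 0 ≤ s → 0 ≤ c s)
    (hadec : AntitoneOn a (Set.Ioi 0)) (hbdec : AntitoneOn b (Set.Ioi 0))
    (hcdec : AntitoneOn c (Set.Ioi 0))
    (hsub : ∀ s : ℝ, 0 < s → a s + 2 * b s + c s < 1)
    (hcontr : ∀ x y : X, x ≠ y →
      eAlt φ (T x) (T y) ≤ a (dist x y) * eAlt φ x y
        + b (dist x y) * (eAlt φ x (T x) + eAlt φ y (T y))
        + c (dist x y) * min (eAlt φ x (T y)) (eAlt φ (T x) y)) :
    ∃ z : X, z = T z ∧ (∀ y : X, y = T y → y = z) ∧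
      ∀ x : X, Tendsto (fun n : ℕ => T^[n] x) atTop (𝓝 z) := by
  classical
  obtain ⟨hφc, hφm, hφ0, hφiff⟩ := hφ
  have hφ00 : φ 0 = 0 := (hφiff 0 le_rfl).mpr rfl
  have hφpos : ∀ s : ℝ, 0 < s → 0 < φ s := by
    intro s hs
    rcases (hφ0 s hs.le).lt_or_eq with h | h
    · exact h
    · exact absurd ((hφiff s hs.le).mp h.symm) (ne_of_gt hs)
  have heNN : ∀ u v : X, 0 ≤ eAlt φ u v := fun u v => hφ0 _ dist_nonneg
  have he0 : ∀ u : X, eAlt φ u u = 0 := fun u => by simp [eAlt, dist_self, hφ00]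
  have hepos : ∀ u v : X, u ≠ v → 0 < eAlt φ u v := fun u v huv =>
    hφpos _ (dist_pos.mpr huv)
  have hφmono : ∀ s t : ℝ, 0 ≤ s → s ≤ t → φ s ≤ φ t := fun s t hs hst =>
    hφm (Set.mem_Ici.mpr hs) (Set.mem_Ici.mpr (hs.trans hst)) hst
  have hblt : ∀ s : ℝ, 0 < s → b s < 1/2 := fun s hs => by
    have h1 := hsub s hs; have h2 := ha0 s hs.le; have h3 := hc0 s hs.le; linarith
  have halt : ∀ s : ℝ, 0 < s → a s < 1 := fun s hs => by
    have h1 := hsub s hs; have h2 := hb0 s hs.le; have h3 := hc0 s hs.le; linarith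
  have hclt : ∀ s : ℝ, 0 < s → c s < 1 := fun s hs => by
    have h1 := hsub s hs; have h2 := hb0 s hs.le; have h3 := ha0 s hs.le; linarith
  have hφtend : ∀ (u : ℕ → ℝ) (l : ℝ), 0 ≤ l → (∀ n, 0 ≤ u n) →
      Tendsto u atTop (𝓝 l) → Tendsto (fun n => φ (u n)) atTop (𝓝 (φ l)) := by
    intro u l hl hu hul
    exact (hφc l (Set.mem_Ici.mpr hl)).tendsto.comp
      (tendsto_nhdsWithin_iff.mpr ⟨hul, Eventually.of_forall fun n => Set.mem_Ici.mpr (hu n)⟩)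
  -- uniqueness of fixed points
  have huniq : ∀ y w : X, y = T y → w = T w → y = w := by
    intro y w hy hw
    by_contra hyw
    have hd : (0:ℝ) < dist y w := dist_pos.mpr hyw
    have h := hcontr y w hyw
    rw [← hy, ← hw, he0 y, he0 w, min_self] at h
    have hE : 0 < eAlt φ y w := hepos y w hyw
    have h1 := halt _ hd
    have h2 := hclt _ hd
    have h3 := hb0 _ hd.le
    have h4 := hsub _ hd
    nlinarith
  -- every orbit converges to (some) fixed point
  have hconv : ∀ x : X, ∃ z : X, z = T z ∧
      Tendsto (fun n : ℕ => T^[n] x) atTop (𝓝 z) := by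
    intro x
    set xs : ℕ → X := fun n : ℕ => T^[n] x with hxs
    have hsucc : ∀ n : ℕ, xs (n+1) = T (xs n) := by
      intro n; simp only [hxs]; exact Function.iterate_succ_apply' T n x
    by_cases hA : ∃ n, T (xs n) = xs n
    · -- orbit hits a fixed point
      obtain ⟨n, hn⟩ := hA
      refine ⟨xs n, hn.symm, ?_⟩
      have hconst : ∀ m, n ≤ m → xs m = xs n := by
        intro m hm
        induction m, hm using Nat.le_induction with
        | base => rfl
        | succ m hm ih => rw [hsucc m, ih, hn]
      exact tendsto_atTop_of_eventually_const hconst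
    · push_neg at hA
      have hne : ∀ n, xs n ≠ xs (n+1) := by
        intro n h
        exact hA n (by rw [hsucc n] at h; exact h.symm)
      have hDpos : ∀ n, 0 < dist (xs n) (xs (n+1)) := fun n => dist_pos.mpr (hne n)
      have hENN : ∀ n, 0 ≤ eAlt φ (xs n) (xs (n+1)) := fun n => heNN _ _
      have hEpos : ∀ n, 0 < eAlt φ (xs n) (xs (n+1)) := fun n => hepos _ _ (hne n)
      -- one-step inequality
      have hstep : ∀ n, (1 - b (dist (xs n) (xs (n+1)))) * eAlt φ (xs (n+1)) (xs (n+2)) ≤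
          (a (dist (xs n) (xs (n+1))) + b (dist (xs n) (xs (n+1)))) * eAlt φ (xs n) (xs (n+1)) := by
        intro n
        have h := hcontr (xs n) (xs (n+1)) (hne n)
        rw [← hsucc n, ← hsucc (n+1)] at h
        rw [he0 (xs (n+1)), min_eq_right (heNN (xs n) (xs (n+2)))] at h
        nlinarith [h]
      -- strict decrease of e and d along the orbit
      have hElt : ∀ n, eAlt φ (xs (n+1)) (xs (n+2)) < eAlt φ (xs n) (xs (n+1)) := by
        intro n
        have h := hstep n
        have hb' := hblt _ (hDpos n)
        have h4 := hsub _ (hDpos n)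
        have hc' := hc0 _ (hDpos n).le
        have hE := hEpos n
        have hE' := hENN (n+1)
        nlinarith
      have hDlt : ∀ n, dist (xs (n+1)) (xs (n+2)) < dist (xs n) (xs (n+1)) := by
        intro n
        by_contra hle
        push_neg at hle
        exact absurd (hφmono _ _ (hDpos n).le hle) (not_le.mpr (hElt n))
      have hDanti : Antitone (fun n => dist (xs n) (xs (n+1))) :=
        antitone_nat_of_succ_le fun n => (hDlt n).le
      have hDbdd : BddBelow (Set.range (fun n => dist (xs n) (xs (n+1)))) :=
        ⟨0, by rintro r ⟨n, rfl⟩; exact dist_nonneg⟩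
      have hDtendInf : Tendsto (fun n => dist (xs n) (xs (n+1))) atTop
          (𝓝 (⨅ n, dist (xs n) (xs (n+1)))) := tendsto_atTop_ciInf hDanti hDbdd
      have hInfNN : 0 ≤ ⨅ n, dist (xs n) (xs (n+1)) := le_ciInf fun n => dist_nonneg
      have hInf0 : (⨅ n, dist (xs n) (xs (n+1))) = 0 := by
        by_contra hδne
        have hδpos : 0 < ⨅ n, dist (xs n) (xs (n+1)) := hInfNN.lt_of_ne (Ne.symm hδne)
        set δ := ⨅ n, dist (xs n) (xs (n+1)) with hδdef
        have hDge : ∀ n, δ ≤ dist (xs n) (xs (n+1)) := fun n => ciInf_le hDbdd n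
        have hbb : ∀ n, b (dist (xs n) (xs (n+1))) ≤ b δ := fun n =>
          hbdec (Set.mem_Ioi.mpr hδpos) (Set.mem_Ioi.mpr (hDpos n)) (hDge n)
        have haa : ∀ n, a (dist (xs n) (xs (n+1))) ≤ a δ := fun n =>
          hadec (Set.mem_Ioi.mpr hδpos) (Set.mem_Ioi.mpr (hDpos n)) (hDge n)
        have hbδ : b δ < 1/2 := hblt δ hδpos
        have haδ : 0 ≤ a δ := ha0 δ hδpos.le
        have hbδ0 : 0 ≤ b δ := hb0 δ hδpos.le
        have hcδ0 : 0 ≤ c δ := hc0 δ hδpos.le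
        set k := (a δ + b δ) / (1 - b δ) with hkdef
        have hk0 : 0 ≤ k := div_nonneg (by linarith) (by linarith)
        have hk1 : k < 1 := by
          rw [hkdef, div_lt_one (by linarith)]
          have := hsub δ hδpos
          linarith
        have hkstep : ∀ n, eAlt φ (xs (n+1)) (xs (n+2)) ≤ k * eAlt φ (xs n) (xs (n+1)) := by
          intro n
          rw [hkdef, div_mul_eq_mul_div, le_div_iff₀ (by linarith)]
          have h := hstep n
          have h1 := hbb n
          have h2 := haa n
          have h3 := hENN n
          have h4 := hENN (n+1)
          have h5 := hb0 _ (hDpos n).le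
          nlinarith
        have hEbound : ∀ n, eAlt φ (xs n) (xs (n+1)) ≤ k ^ n * eAlt φ (xs 0) (xs 1) := by
          intro n
          induction n with
          | zero => simp
          | succ n ih =>
            calc eAlt φ (xs (n+1)) (xs (n+2)) ≤ k * eAlt φ (xs n) (xs (n+1)) := hkstep n
            _ ≤ k * (k ^ n * eAlt φ (xs 0) (xs 1)) := by
                exact mul_le_mul_of_nonneg_left ih hk0
            _ = k ^ (n+1) * eAlt φ (xs 0) (xs 1) := by ring
        have htend0 : Tendsto (fun n => k ^ n * eAlt φ (xs 0) (xs 1)) atTop (𝓝 0) := by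
          simpa using (tendsto_pow_atTop_nhds_zero_of_lt_one hk0 hk1).mul_const
            (eAlt φ (xs 0) (xs 1))
        have hφδpos : 0 < φ δ := hφpos δ hδpos
        have hle : φ δ ≤ 0 := by
          refine ge_of_tendsto' htend0 (fun n => le_trans ?_ (hEbound n))
          exact hφmono δ _ hδpos.le (hDge n)
        linarith
      have hDtend0 : Tendsto (fun n => dist (xs n) (xs (n+1))) atTop (𝓝 0) := by
        rw [← hInf0]; exact hDtendInf
      have hEtend0 : Tendsto (fun n => eAlt φ (xs n) (xs (n+1))) atTop (𝓝 0) := by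
        have h := hφtend _ 0 le_rfl (fun n => dist_nonneg) hDtend0
        rw [hφ00] at h
        exact h
      -- the orbit is Cauchy
      have hC : CauchySeq xs := by
        rw [Metric.cauchySeq_iff]
        by_contra hnc
        push_neg at hnc
        obtain ⟨ε, hε, hnc⟩ := hnc
        have hLpos : 0 < φ ε := hφpos ε hε
        have haε := ha0 ε hε.le
        have hbε := hb0 ε hε.le
        have hcε := hc0 ε hε.le
        have hSlt : a ε + 2 * b ε + c ε < 1 := hsub ε hε
        obtain ⟨δ, hδdef⟩ : ∃ d : ℝ, d = (1 - (a ε + 2 * b ε + c ε)) * φ ε / 10 := ⟨_, rfl⟩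
        have hδpos : 0 < δ := by
          rw [hδdef]
          have h1 : 0 < (1 - (a ε + 2 * b ε + c ε)) * φ ε :=
            mul_pos (by linarith) hLpos
          linarith
        have hcw := hφc ε (Set.mem_Ici.mpr hε.le)
        rw [Metric.continuousWithinAt_iff] at hcw
        obtain ⟨θ₀, hθ₀pos, hθ₀⟩ := hcw δ hδpos
        obtain ⟨θ, hθdef⟩ : ∃ t : ℝ, t = min θ₀ ε := ⟨_, rfl⟩
        have hθpos : 0 < θ := hθdef ▸ lt_min hθ₀pos hε
        have hθle : θ ≤ ε := hθdef ▸ min_le_right _ _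
        have hφnear : ∀ s : ℝ, 0 ≤ s → |s - ε| < θ → |φ s - φ ε| < δ := by
          intro s hs hsθ
          have h := hθ₀ (Set.mem_Ici.mpr hs)
            (by rw [Real.dist_eq]; exact lt_of_lt_of_le hsθ (hθdef ▸ min_le_left θ₀ ε))
          rwa [Real.dist_eq] at h
        obtain ⟨N₁, hN₁⟩ := eventually_atTop.mp
          (hDtend0.eventually (eventually_lt_nhds (by positivity : (0:ℝ) < θ/2)))
        obtain ⟨N₂, hN₂⟩ := eventually_atTop.mp
          (hEtend0.eventually (eventually_lt_nhds hδpos))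
        obtain ⟨m₀, hm₀, n₀, hn₀, hd₀⟩ := hnc (max N₁ N₂)
        obtain ⟨p, q, hpN, hpq, hdpq⟩ :
            ∃ p q, max N₁ N₂ ≤ p ∧ p < q ∧ ε ≤ dist (xs p) (xs q) := by
          rcases lt_trichotomy m₀ n₀ with h | h | h
          · exact ⟨m₀, n₀, hm₀, h, hd₀⟩
          · exfalso; rw [h, dist_self] at hd₀; linarith
          · exact ⟨n₀, m₀, hn₀, h, by rwa [dist_comm]⟩
        have hexm : ∃ l, p < l ∧ ε ≤ dist (xs p) (xs l) := ⟨q, hpq, hdpq⟩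
        obtain ⟨m, hm1, hm2, hmmin⟩ : ∃ m, p < m ∧ ε ≤ dist (xs p) (xs m) ∧
            ∀ l < m, ¬(p < l ∧ ε ≤ dist (xs p) (xs l)) :=
          ⟨Nat.find hexm, (Nat.find_spec hexm).1, (Nat.find_spec hexm).2,
            fun l hl => Nat.find_min hexm hl⟩
        have hpN₁ : N₁ ≤ p := le_trans (le_max_left _ _) hpN
        have hpN₂ : N₂ ≤ p := le_trans (le_max_right _ _) hpN
        have hDp : dist (xs p) (xs (p+1)) < θ/2 := hN₁ p hpN₁
        have hm_ge : p + 2 ≤ m := by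
          by_contra hlt
          push_neg at hlt
          have hm' : m = p + 1 := by omega
          rw [hm'] at hm2
          linarith
        have hDm : dist (xs m) (xs (m+1)) < θ/2 := hN₁ m (by omega)
        have hEp : eAlt φ (xs p) (xs (p+1)) < δ := hN₂ p hpN₂
        have hEm : eAlt φ (xs m) (xs (m+1)) < δ := hN₂ m (by omega)
        obtain ⟨j, hjm⟩ : ∃ j, m = j + 1 := ⟨m - 1, by omega⟩
        have hjp : p < j := by omega
        have hjN₁ : N₁ ≤ j := by omega
        have hjlt : dist (xs p) (xs j) < ε := by
          have h := hmmin j (by omega)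
          push_neg at h
          exact h hjp
        have hDj : dist (xs j) (xs (j+1)) < θ/2 := hN₁ j hjN₁
        -- s := dist (xs p) (xs m) satisfies ε ≤ s < ε + θ/2
        have hslt : dist (xs p) (xs m) < ε + θ/2 := by
          calc dist (xs p) (xs m) ≤ dist (xs p) (xs j) + dist (xs j) (xs m) :=
              dist_triangle _ _ _
          _ < ε + θ/2 := by rw [hjm]; linarith
        have hspos : 0 < dist (xs p) (xs m) := lt_of_lt_of_le hε hm2
        have hnepm : xs p ≠ xs m := dist_pos.mp hspos
        have h := hcontr (xs p) (xs m) hnepm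
        rw [← hsucc p, ← hsucc m] at h
        -- coefficient bounds via antitonicity
        have haS : a (dist (xs p) (xs m)) ≤ a ε :=
          hadec (Set.mem_Ioi.mpr hε) (Set.mem_Ioi.mpr hspos) hm2
        have hbS : b (dist (xs p) (xs m)) ≤ b ε :=
          hbdec (Set.mem_Ioi.mpr hε) (Set.mem_Ioi.mpr hspos) hm2
        have hcS : c (dist (xs p) (xs m)) ≤ c ε :=
          hcdec (Set.mem_Ioi.mpr hε) (Set.mem_Ioi.mpr hspos) hm2
        have haS0 : 0 ≤ a (dist (xs p) (xs m)) := ha0 _ hspos.le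
        have hbS0 : 0 ≤ b (dist (xs p) (xs m)) := hb0 _ hspos.le
        have hcS0 : 0 ≤ c (dist (xs p) (xs m)) := hc0 _ hspos.le
        -- bound on φ s
        have hφs : φ (dist (xs p) (xs m)) < φ ε + δ := by
          have habs : |dist (xs p) (xs m) - ε| < θ := by
            rw [abs_of_nonneg (by linarith)]; linarith
          have := hφnear _ dist_nonneg habs
          rw [abs_lt] at this
          linarith [this.2]
        -- lower bound on e(x_{p+1}, x_{m+1})
        have htri : ε - dist (xs p) (xs (p+1)) - dist (xs m) (xs (m+1)) ≤
            dist (xs (p+1)) (xs (m+1)) := by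
          have h4 := dist_triangle4 (xs p) (xs (p+1)) (xs (m+1)) (xs m)
          rw [dist_comm (xs (m+1)) (xs m)] at h4
          linarith
        have hw0 : 0 ≤ ε - dist (xs p) (xs (p+1)) - dist (xs m) (xs (m+1)) := by linarith
        have hlow : φ ε - δ < eAlt φ (xs (p+1)) (xs (m+1)) := by
          have habs : |(ε - dist (xs p) (xs (p+1)) - dist (xs m) (xs (m+1))) - ε| < θ := by
            rw [abs_of_nonpos (by linarith [(dist_nonneg : (0:ℝ) ≤ dist (xs p) (xs (p+1))),
              (dist_nonneg : (0:ℝ) ≤ dist (xs m) (xs (m+1)))])]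
            have : -((ε - dist (xs p) (xs (p+1)) - dist (xs m) (xs (m+1))) - ε) =
                dist (xs p) (xs (p+1)) + dist (xs m) (xs (m+1)) := by ring
            rw [this]; linarith
          have h1 := hφnear _ hw0 habs
          rw [abs_lt] at h1
          have h2 : φ (ε - dist (xs p) (xs (p+1)) - dist (xs m) (xs (m+1))) ≤
              eAlt φ (xs (p+1)) (xs (m+1)) := hφmono _ _ hw0 htri
          linarith [h1.1]
        -- bound on the min term
        have hminNN : 0 ≤ min (eAlt φ (xs p) (xs (m+1))) (eAlt φ (xs (p+1)) (xs m)) :=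
          le_min (heNN _ _) (heNN _ _)
        have hminle : min (eAlt φ (xs p) (xs (m+1))) (eAlt φ (xs (p+1)) (xs m)) <
            φ ε + δ := by
          have h1 : dist (xs p) (xs (m+1)) ≤ dist (xs p) (xs m) + dist (xs m) (xs (m+1)) :=
            dist_triangle _ _ _
          have h2 : eAlt φ (xs p) (xs (m+1)) ≤
              φ (dist (xs p) (xs m) + dist (xs m) (xs (m+1))) :=
            hφmono _ _ dist_nonneg h1
          have habs : |(dist (xs p) (xs m) + dist (xs m) (xs (m+1))) - ε| < θ := by
            rw [abs_of_nonneg (by linarith [(dist_nonneg : (0:ℝ) ≤ dist (xs m) (xs (m+1)))])]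
            linarith [(dist_nonneg : (0:ℝ) ≤ dist (xs m) (xs (m+1)))]
          have h3 := hφnear _ (by positivity) habs
          rw [abs_lt] at h3
          calc min (eAlt φ (xs p) (xs (m+1))) (eAlt φ (xs (p+1)) (xs m)) ≤
              eAlt φ (xs p) (xs (m+1)) := min_le_left _ _
          _ ≤ φ (dist (xs p) (xs m) + dist (xs m) (xs (m+1))) := h2
          _ < φ ε + δ := by linarith [h3.2]
        -- assemble the contradiction
        have hePm : 0 ≤ eAlt φ (xs p) (xs m) := heNN _ _
        have hEp0 : 0 ≤ eAlt φ (xs p) (xs (p+1)) := heNN _ _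
        have hEm0 : 0 ≤ eAlt φ (xs m) (xs (m+1)) := heNN _ _
        have hb1 : a (dist (xs p) (xs m)) * eAlt φ (xs p) (xs m) ≤ a ε * (φ ε + δ) := by
          calc a (dist (xs p) (xs m)) * eAlt φ (xs p) (xs m)
              ≤ a ε * eAlt φ (xs p) (xs m) := mul_le_mul_of_nonneg_right haS hePm
          _ ≤ a ε * (φ ε + δ) := mul_le_mul_of_nonneg_left (le_of_lt hφs) haε
        have hb2 : b (dist (xs p) (xs m)) *
            (eAlt φ (xs p) (xs (p+1)) + eAlt φ (xs m) (xs (m+1))) ≤ b ε * (2*δ) := by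
          calc b (dist (xs p) (xs m)) * (eAlt φ (xs p) (xs (p+1)) + eAlt φ (xs m) (xs (m+1)))
              ≤ b ε * (eAlt φ (xs p) (xs (p+1)) + eAlt φ (xs m) (xs (m+1))) :=
            mul_le_mul_of_nonneg_right hbS (by linarith)
          _ ≤ b ε * (2*δ) := mul_le_mul_of_nonneg_left (by linarith) hbε
        have hb3 : c (dist (xs p) (xs m)) *
            min (eAlt φ (xs p) (xs (m+1))) (eAlt φ (xs (p+1)) (xs m)) ≤ c ε * (φ ε + δ) := by
          calc c (dist (xs p) (xs m)) *
              min (eAlt φ (xs p) (xs (m+1))) (eAlt φ (xs (p+1)) (xs m))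
              ≤ c ε * min (eAlt φ (xs p) (xs (m+1))) (eAlt φ (xs (p+1)) (xs m)) :=
            mul_le_mul_of_nonneg_right hcS hminNN
          _ ≤ c ε * (φ ε + δ) := mul_le_mul_of_nonneg_left (le_of_lt hminle) hcε
        have hfinal : φ ε - δ < a ε * (φ ε + δ) + b ε * (2*δ) + c ε * (φ ε + δ) := by
          linarith [h, hlow, hb1, hb2, hb3]
        -- numeric contradiction
        have exp1 : a ε * (φ ε + δ) = a ε * φ ε + a ε * δ := by ring
        have exp2 : c ε * (φ ε + δ) = c ε * φ ε + c ε * δ := by ring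
        have expδ : 10 * δ = φ ε - (a ε * φ ε + 2*(b ε * φ ε) + c ε * φ ε) := by
          rw [hδdef]; ring
        have r1 : a ε * δ ≤ 1 * δ := mul_le_mul_of_nonneg_right (halt ε hε).le hδpos.le
        have r2 : c ε * δ ≤ 1 * δ := mul_le_mul_of_nonneg_right (hclt ε hε).le hδpos.le
        have r3 : b ε * (2*δ) ≤ 1 * (2*δ) :=
          mul_le_mul_of_nonneg_right (by linarith [hblt ε hε]) (by linarith)
        have r4 : 0 ≤ b ε * φ ε := mul_nonneg hbε hLpos.le
        linarith [hfinal, exp1, exp2, expδ, r1, r2, r3, r4]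
      obtain ⟨z, hz⟩ := cauchySeq_tendsto_of_complete hC
      refine ⟨z, ?_, hz⟩
      by_contra hzT
      have hr : 0 < dist z (T z) := dist_pos.mpr hzT
      have hLpos : 0 < φ (dist z (T z)) := hφpos _ hr
      have h1 : Tendsto (fun n => dist (xs n) z) atTop (𝓝 0) :=
        tendsto_iff_dist_tendsto_zero.mp hz
      have h1' : Tendsto (fun n => φ (dist (xs n) z)) atTop (𝓝 0) := by
        have h := hφtend _ 0 le_rfl (fun n => dist_nonneg) h1
        rwa [hφ00] at h
      have hshift : Tendsto (fun n => xs (n+1)) atTop (𝓝 z) :=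
        hz.comp (tendsto_add_atTop_nat 1)
      have h2 : Tendsto (fun n => dist (xs (n+1)) z) atTop (𝓝 0) :=
        tendsto_iff_dist_tendsto_zero.mp hshift
      have h2' : Tendsto (fun n => φ (dist (xs (n+1)) z)) atTop (𝓝 0) := by
        have h := hφtend _ 0 le_rfl (fun n => dist_nonneg) h2
        rwa [hφ00] at h
      have h3 : Tendsto (fun n => dist (xs (n+1)) (T z)) atTop (𝓝 (dist z (T z))) :=
        hshift.dist tendsto_const_nhds
      have h3' : Tendsto (fun n => φ (dist (xs (n+1)) (T z))) atTop (𝓝 (φ (dist z (T z)))) :=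
        hφtend _ _ hr.le (fun n => dist_nonneg) h3
      have hev : ∀ᶠ n in atTop, dist (xs n) z < dist z (T z) / 2 ∧
          dist (xs (n+1)) z < dist z (T z) / 2 ∧
          φ (dist (xs n) z) < φ (dist z (T z)) / 8 ∧
          eAlt φ (xs n) (xs (n+1)) < φ (dist z (T z)) / 8 ∧
          φ (dist (xs (n+1)) z) < φ (dist z (T z)) / 8 ∧
          φ (dist z (T z)) - φ (dist z (T z)) / 8 < φ (dist (xs (n+1)) (T z)) := by
        have e1 := h1.eventually (eventually_lt_nhds (by positivity : (0:ℝ) < dist z (T z) / 2))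
        have e2 := h2.eventually (eventually_lt_nhds (by positivity : (0:ℝ) < dist z (T z) / 2))
        have e3 := h1'.eventually (eventually_lt_nhds (by positivity : (0:ℝ) < φ (dist z (T z)) / 8))
        have e4 := hEtend0.eventually (eventually_lt_nhds (by positivity : (0:ℝ) < φ (dist z (T z)) / 8))
        have e5 := h2'.eventually (eventually_lt_nhds (by positivity : (0:ℝ) < φ (dist z (T z)) / 8))
        have e6 := h3'.eventually (eventually_gt_nhds
          (show φ (dist z (T z)) - φ (dist z (T z)) / 8 < φ (dist z (T z)) by linarith))
        filter_upwards [e1, e2, e3, e4, e5, e6] with n a1 a2 a3 a4 a5 a6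
        exact ⟨a1, a2, a3, a4, a5, a6⟩
      obtain ⟨n, hn1, hn2, hn3, hn4, hn5, hn6⟩ := hev.exists
      have hnez : xs n ≠ z := by
        intro hEq
        have hTz : xs (n+1) = T z := by rw [hsucc n, hEq]
        rw [hTz, dist_comm] at hn2
        linarith
      have hs : 0 < dist (xs n) z := dist_pos.mpr hnez
      have h := hcontr (xs n) z hnez
      rw [← hsucc n] at h
      have hA' := halt _ hs
      have hB' := hblt _ hs
      have hC' := hclt _ hs
      have hA0 := ha0 _ hs.le
      have hB0 := hb0 _ hs.le
      have hC0 := hc0 _ hs.le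
      have hminle : min (eAlt φ (xs n) (T z)) (eAlt φ (xs (n+1)) z) ≤ eAlt φ (xs (n+1)) z :=
        min_le_right _ _
      have hminNN : 0 ≤ min (eAlt φ (xs n) (T z)) (eAlt φ (xs (n+1)) z) :=
        le_min (heNN _ _) (heNN _ _)
      have ht1 : 0 ≤ eAlt φ (xs n) z := heNN _ _
      have ht2 : 0 ≤ eAlt φ (xs n) (xs (n+1)) := heNN _ _
      have he1 : a (dist (xs n) z) * eAlt φ (xs n) z ≤ eAlt φ (xs n) z :=
        (mul_le_mul_of_nonneg_right hA'.le ht1).trans_eq (one_mul _)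
      have he2 : b (dist (xs n) z) * (eAlt φ (xs n) (xs (n+1)) + eAlt φ z (T z)) ≤
          (1/2) * (eAlt φ (xs n) (xs (n+1)) + eAlt φ z (T z)) :=
        mul_le_mul_of_nonneg_right hB'.le (add_nonneg ht2 (heNN _ _))
      have he3 : c (dist (xs n) z) *
          min (eAlt φ (xs n) (T z)) (eAlt φ (xs (n+1)) z) ≤
          min (eAlt φ (xs n) (T z)) (eAlt φ (xs (n+1)) z) :=
        (mul_le_mul_of_nonneg_right hC'.le hminNN).trans_eq (one_mul _)
      have hn3' : eAlt φ (xs n) z < φ (dist z (T z)) / 8 := hn3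
      have hn5' : eAlt φ (xs (n+1)) z < φ (dist z (T z)) / 8 := hn5
      have hn6' : φ (dist z (T z)) - φ (dist z (T z)) / 8 < eAlt φ (xs (n+1)) (T z) := hn6
      have hLeq : eAlt φ z (T z) = φ (dist z (T z)) := rfl
      linarith [h, he1, he2, he3, hminle, hn3', hn4, hn5', hn6', hLeq]
  obtain ⟨z, hz, hzconv⟩ := hconv (Classical.arbitrary X)
  refine ⟨z, hz, fun y hy => huniq y z hy hz, fun x => ?_⟩
  obtain ⟨z', hz', hconv'⟩ := hconv x
  rwa [huniq z' z hz' hz] at hconv'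
end

section
/- Let (X,d) be a complete metric space and T : X → X. Suppose there exist a, b ∈ [0,∞) and K : [0,∞) → [0,∞) such that: d(Tx,Ty) ≤ a·d(x,y) + b·[d(x,Tx) + d(y,Ty)] + K(d(Tx,y)) for all x,y ∈ X; a + 2b < 1; K(0) = 0 and K(t) → 0 as t → 0. Then T is a strong Picard operator (modulo d): for each x ∈ X the sequence (Tⁿx; n ≥ 0) converges in (X,d) and its limit is a fixed point of T. -/
open Filter Topology

/-- **Theorem 5.** Let `(X,d)` be complete and `T : X → X`. Suppose there are
`a, b ≥ 0` and `K : [0,∞) → [0,∞)` such that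
`d(Tx,Ty) ≤ a·d(x,y) + b·[d(x,Tx) + d(y,Ty)] + K(d(Tx,y))` for all `x,y`,
with `a + 2b < 1`, `K(0) = 0` and `K(t) → 0` as `t → 0` (within `[0,∞)`).
Then `T` is a strong Picard operator: every orbit `Tⁿx` converges and its
limit is a fixed point of `T`. -/
theorem K_perturbed_contraction_strong_picard {X : Type*} [MetricSpace X]
    [CompleteSpace X] (T : X → X) (a b : ℝ) (K : ℝ → ℝ)
    (ha : 0 ≤ a) (hb : 0 ≤ b) (hK0 : ∀ t, 0 ≤ t → 0 ≤ K t)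
    (hab : a + 2 * b < 1) (hKzero : K 0 = 0)
    (hKlim : Tendsto K (𝓝[≥] (0 : ℝ)) (𝓝 0))
    (hcontr : ∀ x y : X, dist (T x) (T y) ≤ a * dist x y
      + b * (dist x (T x) + dist y (T y)) + K (dist (T x) y)) :
    ∀ x : X, ∃ z : X,
      Tendsto (fun n : ℕ => T^[n] x) atTop (𝓝 z) ∧ z = T z := by
  have h1b : 0 < 1 - b := by linarith
  set r := (a + b) / (1 - b) with hr_def
  have hr0 : 0 ≤ r := div_nonneg (by linarith) h1b.le
  have hr1 : r < 1 := (div_lt_one h1b).2 (by linarith)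
  have key : ∀ p : X, dist (T p) (T (T p)) ≤ r * dist p (T p) := by
    intro p
    have h := hcontr p (T p)
    rw [dist_self, hKzero] at h
    rw [hr_def, div_mul_eq_mul_div, le_div_iff₀ h1b]
    nlinarith [dist_nonneg (x := p) (y := T p)]
  intro x
  set f := fun n : ℕ => T^[n] x with hf
  have hfe : ∀ n, f (n + 1) = T (f n) := by
    intro n; simp [hf, Function.iterate_succ_apply']
  have hstep : ∀ n, dist (f n) (f (n + 1)) ≤ dist x (T x) * r ^ n := by
    intro n
    induction n with
    | zero => simp [hf]
    | succ n ih =>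
      calc dist (f (n + 1)) (f (n + 2)) = dist (T (f n)) (T (T (f n))) := by
            rw [hfe, hfe, hfe]
        _ ≤ r * dist (f n) (T (f n)) := key (f n)
        _ = r * dist (f n) (f (n + 1)) := by rw [hfe]
        _ ≤ r * (dist x (T x) * r ^ n) := mul_le_mul_of_nonneg_left ih hr0
        _ = dist x (T x) * r ^ (n + 1) := by ring
  have hcau : CauchySeq f := cauchySeq_of_le_geometric r (dist x (T x)) hr1 hstep
  obtain ⟨z, hz⟩ := cauchySeq_tendsto_of_complete hcau
  refine ⟨z, hz, ?_⟩
  have hsucc : Tendsto (fun n => f (n + 1)) atTop (𝓝 z) :=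
    hz.comp (tendsto_add_atTop_nat 1)
  have hdist0 : Tendsto (fun n => dist (f (n + 1)) z) atTop (𝓝 0) :=
    tendsto_iff_dist_tendsto_zero.1 hsucc
  have hdist0' : Tendsto (fun n => dist (f n) z) atTop (𝓝 0) :=
    tendsto_iff_dist_tendsto_zero.1 hz
  have hKterm : Tendsto (fun n => K (dist (f (n + 1)) z)) atTop (𝓝 0) := by
    apply hKlim.comp
    rw [tendsto_nhdsWithin_iff]
    exact ⟨hdist0, Eventually.of_forall fun n => dist_nonneg⟩
  have hself : Tendsto (fun n => dist (f n) (f (n + 1))) atTop (𝓝 0) := by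
    have hpow : Tendsto (fun n : ℕ => dist x (T x) * r ^ n) atTop (𝓝 0) := by
      simpa using (tendsto_pow_atTop_nhds_zero_of_lt_one hr0 hr1).const_mul (dist x (T x))
    exact squeeze_zero (fun n => dist_nonneg) hstep hpow
  have hLHS : Tendsto (fun n => dist (f (n + 1)) (T z)) atTop (𝓝 (dist z (T z))) :=
    hsucc.dist tendsto_const_nhds
  have hRHS : Tendsto (fun n => a * dist (f n) z
      + b * (dist (f n) (f (n + 1)) + dist z (T z)) + K (dist (f (n + 1)) z))
      atTop (𝓝 (a * 0 + b * (0 + dist z (T z)) + 0)) := by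
    exact ((hdist0'.const_mul a).add ((hself.add tendsto_const_nhds).const_mul b)).add hKterm
  have hle : dist z (T z) ≤ a * 0 + b * (0 + dist z (T z)) + 0 := by
    refine le_of_tendsto_of_tendsto' hLHS hRHS fun n => ?_
    calc dist (f (n + 1)) (T z) = dist (T (f n)) (T z) := by rw [hfe]
      _ ≤ a * dist (f n) z + b * (dist (f n) (T (f n)) + dist z (T z))
          + K (dist (T (f n)) z) := hcontr (f n) z
      _ = a * dist (f n) z + b * (dist (f n) (f (n + 1)) + dist z (T z))
          + K (dist (f (n + 1)) z) := by rw [hfe]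
  have : dist z (T z) = 0 := by nlinarith [dist_nonneg (x := z) (y := T z)]
  exact (dist_eq_zero.1 this)
end

section
/- Let (X,d) be a metric space and T : X → X. Suppose there exist a, b ∈ [0,∞) with a + 2b < 1 and K : [0,∞) → [0,∞) with K(0) = 0 such that d(Tx,Ty) ≤ a·d(x,y) + b·[d(x,Tx) + d(y,Ty)] + K(d(Tx,y)) for all x,y ∈ X. Put λ := (a+b)/(1−b), so λ < 1. Then for every u ∈ X and n ≥ 0: d(Tⁿ⁺¹u, Tⁿ⁺²u) ≤ λ·d(Tⁿu, Tⁿ⁺¹u), and consequently d(Tⁿu, Tⁿ⁺¹u) ≤ λⁿ·d(u, Tu); in particular, the sequence (Tⁿu; n ≥ 0) is d-Cauchy. -/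
open Filter Topology

/-- **Steps (4.1)–(4.2) of Theorem 5's proof.** Let `(X,d)` be a metric space,
`T : X → X`, `a, b ≥ 0` with `a + 2b < 1`, and `K : [0,∞) → [0,∞)` with
`K(0) = 0`, such that
`d(Tx,Ty) ≤ a·d(x,y) + b·[d(x,Tx) + d(y,Ty)] + K(d(Tx,y))` for all `x,y`.
Put `λ := (a+b)/(1−b)`; then `λ < 1`, and for every `u` and `n`:
`d(Tⁿ⁺¹u, Tⁿ⁺²u) ≤ λ·d(Tⁿu, Tⁿ⁺¹u)` and `d(Tⁿu, Tⁿ⁺¹u) ≤ λⁿ·d(u, Tu)`;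
in particular every orbit `(Tⁿu)` is `d`-Cauchy. -/
theorem K_perturbed_contraction_orbit_estimates {X : Type*} [MetricSpace X]
    (T : X → X) (a b : ℝ) (K : ℝ → ℝ)
    (ha : 0 ≤ a) (hb : 0 ≤ b) (hK0 : ∀ t, 0 ≤ t → 0 ≤ K t)
    (hab : a + 2 * b < 1) (hKzero : K 0 = 0)
    (hcontr : ∀ x y : X, dist (T x) (T y) ≤ a * dist x y
      + b * (dist x (T x) + dist y (T y)) + K (dist (T x) y)) :
    (a + b) / (1 - b) < 1 ∧
    ∀ u : X,
      (∀ n : ℕ, dist (T^[n + 1] u) (T^[n + 2] u)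
          ≤ (a + b) / (1 - b) * dist (T^[n] u) (T^[n + 1] u)) ∧
      (∀ n : ℕ, dist (T^[n] u) (T^[n + 1] u)
          ≤ ((a + b) / (1 - b)) ^ n * dist u (T u)) ∧
      CauchySeq (fun n : ℕ => T^[n] u) := by
  have hb1 : b < 1 := by linarith
  have h1b : 0 < 1 - b := by linarith
  have hlam : (a + b) / (1 - b) < 1 := by
    rw [div_lt_one h1b]; linarith
  have hlam0 : 0 ≤ (a + b) / (1 - b) := div_nonneg (by linarith) h1b.le
  refine ⟨hlam, fun u => ?_⟩
  have key : ∀ n : ℕ, dist (T^[n + 1] u) (T^[n + 2] u)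
      ≤ (a + b) / (1 - b) * dist (T^[n] u) (T^[n + 1] u) := by
    intro n
    have h := hcontr (T^[n] u) (T^[n+1] u)
    have e1 : T (T^[n] u) = T^[n+1] u := by
      simp [Function.iterate_succ_apply']
    have e2 : T (T^[n+1] u) = T^[n+2] u := by
      simp [Function.iterate_succ_apply']
    rw [e1, e2, dist_self, hKzero] at h
    set d0 := dist (T^[n] u) (T^[n+1] u)
    set d1 := dist (T^[n+1] u) (T^[n+2] u)
    have : (1 - b) * d1 ≤ (a + b) * d0 := by nlinarith
    rw [div_mul_eq_mul_div, le_div_iff₀ h1b, mul_comm d1 (1 - b)]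
    linarith [this]
  have pow : ∀ n : ℕ, dist (T^[n] u) (T^[n + 1] u)
      ≤ ((a + b) / (1 - b)) ^ n * dist u (T u) := by
    intro n
    induction n with
    | zero => simp
    | succ n ih =>
      calc dist (T^[n+1] u) (T^[n+2] u) ≤ (a + b) / (1 - b) * dist (T^[n] u) (T^[n+1] u) := key n
        _ ≤ (a + b) / (1 - b) * (((a + b) / (1 - b)) ^ n * dist u (T u)) := by
            exact mul_le_mul_of_nonneg_left ih hlam0
        _ = ((a + b) / (1 - b)) ^ (n+1) * dist u (T u) := by ring
  refine ⟨key, pow, ?_⟩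
  exact cauchySeq_of_le_geometric _ (dist u (T u)) hlam
    (fun n => by simpa [mul_comm] using pow n)
end

section
/- Let (X,d) be a complete metric space and T : X → X. Suppose there exist a, b ∈ [0,∞) with a + 2b < 1 and K : [0,∞) → [0,∞) with K(0) = 0 and K(t) → 0 as t → 0, such that d(Tx,Ty) ≤ a·d(x,y) + b·[d(x,Tx) + d(y,Ty)] + K(d(Tx,y)) for all x,y ∈ X. Put λ := (a+b)/(1−b), so λ < 1. Then for every u ∈ X the sequence (Tⁿu; n ≥ 0) converges to some point T^∞u ∈ Fix(T), and the error estimate d(Tⁿu, T^∞u) ≤ [λⁿ/(1−λ)]·d(u, Tu) holds for all n ≥ 0. -/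
/-!
The hypothesis with `y = T x` kills the perturbation (`K 0 = 0`) and gives
`d(Tx, T²x) ≤ λ·d(x, Tx)`, so every orbit is Cauchy with geometrically decaying steps;
this yields the limit `z` and the a priori estimate. Applying the hypothesis to `(Tⁿu, z)`
and letting `n → ∞` leaves `d(z, Tz) ≤ b·d(z, Tz)`, where now `K(d(Tⁿ⁺¹u, z)) → 0` because
`K(t) → 0` as `t → 0⁺`; since `b < 1`, `z` is fixed.
-/

open Filter Topology

section OrbitEstimates

variable {X : Type*} [PseudoMetricSpace X] {T : X → X} {r : ℝ}

theorem dist_iterate_succ_le_geometric_of_dist_apply_le (hr : 0 ≤ r)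
    (hT : ∀ x, dist (T x) (T (T x)) ≤ r * dist x (T x)) (u : X) (n : ℕ) :
    dist (T^[n] u) (T^[n + 1] u) ≤ dist u (T u) * r ^ n := by
  induction n with
  | zero => simp
  | succ n ih =>
    calc dist (T^[n + 1] u) (T^[n + 2] u)
        = dist (T (T^[n] u)) (T (T (T^[n] u))) := by
          simp only [Function.iterate_succ_apply']
      _ ≤ r * dist (T^[n] u) (T (T^[n] u)) := hT _
      _ = r * dist (T^[n] u) (T^[n + 1] u) := by rw [Function.iterate_succ_apply']
      _ ≤ r * (dist u (T u) * r ^ n) := mul_le_mul_of_nonneg_left ih hr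
      _ = dist u (T u) * r ^ (n + 1) := by ring

theorem exists_tendsto_iterate_of_dist_apply_le [CompleteSpace X] (hr₀ : 0 ≤ r) (hr₁ : r < 1)
    (hT : ∀ x, dist (T x) (T (T x)) ≤ r * dist x (T x)) (u : X) :
    ∃ z, Tendsto (fun n => T^[n] u) atTop (𝓝 z) ∧
      ∀ n, dist (T^[n] u) z ≤ r ^ n / (1 - r) * dist u (T u) := by
  have hgeom := dist_iterate_succ_le_geometric_of_dist_apply_le hr₀ hT u
  obtain ⟨z, hz⟩ := cauchySeq_tendsto_of_complete (cauchySeq_of_le_geometric r _ hr₁ hgeom)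
  refine ⟨z, hz, fun n => ?_⟩
  calc dist (T^[n] u) z ≤ dist u (T u) * r ^ n / (1 - r) :=
        dist_le_of_le_geometric_of_tendsto r _ hr₁ hgeom hz n
    _ = r ^ n / (1 - r) * dist u (T u) := by ring

end OrbitEstimates

section PerturbedContraction

variable {X : Type*} [MetricSpace X] {T : X → X} {a b : ℝ} {K : ℝ → ℝ}

theorem dist_apply_apply_le_of_perturbed_contraction (hb : b < 1) (hKzero : K 0 = 0)
    (hT : ∀ x y : X, dist (T x) (T y) ≤ a * dist x y
      + b * (dist x (T x) + dist y (T y)) + K (dist (T x) y)) (x : X) :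
    dist (T x) (T (T x)) ≤ (a + b) / (1 - b) * dist x (T x) := by
  have h := hT x (T x)
  rw [dist_self, hKzero] at h
  rw [div_mul_eq_mul_div, le_div_iff₀ (sub_pos.2 hb)]
  linarith

theorem isFixedPt_of_tendsto_iterate_of_perturbed_contraction (hb : b < 1)
    (hKlim : Tendsto K (𝓝[≥] (0 : ℝ)) (𝓝 0))
    (hT : ∀ x y : X, dist (T x) (T y) ≤ a * dist x y
      + b * (dist x (T x) + dist y (T y)) + K (dist (T x) y))
    {u z : X} (hz : Tendsto (fun n => T^[n] u) atTop (𝓝 z)) :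
    Function.IsFixedPt T z := by
  have hz' : Tendsto (fun n => T (T^[n] u)) atTop (𝓝 z) := by
    simpa only [Function.comp_def, Function.iterate_succ_apply'] using
      hz.comp (tendsto_add_atTop_nat 1)
  have hK : Tendsto (fun n => K (dist (T (T^[n] u)) z)) atTop (𝓝 0) := by
    refine hKlim.comp (tendsto_nhdsWithin_iff.2 ⟨?_, .of_forall fun _ => dist_nonneg⟩)
    simpa only [dist_self] using hz'.dist (tendsto_const_nhds (x := z))
  have hbound : ∀ n, dist z (T z) ≤ dist z (T (T^[n] u)) + (a * dist (T^[n] u) z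
      + b * (dist (T^[n] u) (T (T^[n] u)) + dist z (T z)) + K (dist (T (T^[n] u)) z)) :=
    fun n => (dist_triangle z (T (T^[n] u)) (T z)).trans (add_le_add_right (hT _ z) _)
  have hlim : Tendsto (fun n => dist z (T (T^[n] u)) + (a * dist (T^[n] u) z
      + b * (dist (T^[n] u) (T (T^[n] u)) + dist z (T z)) + K (dist (T (T^[n] u)) z)))
      atTop (𝓝 (dist z z + (a * dist z z + b * (dist z z + dist z (T z)) + 0))) :=
    (tendsto_const_nhds.dist hz').add ((((hz.dist tendsto_const_nhds).const_mul a).add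
      (((hz.dist hz').add tendsto_const_nhds).const_mul b)).add hK)
  have hle : dist z (T z) ≤ b * dist z (T z) := by
    simpa using ge_of_tendsto' hlim hbound
  have hdist : dist z (T z) = 0 := by nlinarith [dist_nonneg (x := z) (y := T z)]
  exact (dist_eq_zero.1 hdist).symm

end PerturbedContraction

theorem K_perturbed_contraction_error_estimate_general {X : Type*} [MetricSpace X]
    [CompleteSpace X] (T : X → X) (a b : ℝ) (K : ℝ → ℝ)
    (ha : 0 ≤ a) (hb : 0 ≤ b)
    (hab : a + 2 * b < 1) (hKzero : K 0 = 0)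
    (hKlim : Tendsto K (𝓝[≥] (0 : ℝ)) (𝓝 0))
    (hcontr : ∀ x y : X, dist (T x) (T y) ≤ a * dist x y
      + b * (dist x (T x) + dist y (T y)) + K (dist (T x) y)) :
    (a + b) / (1 - b) < 1 ∧
    ∀ u : X, ∃ z : X,
      Tendsto (fun n : ℕ => T^[n] u) atTop (𝓝 z) ∧ z = T z ∧
      ∀ n : ℕ, dist (T^[n] u) z
        ≤ ((a + b) / (1 - b)) ^ n / (1 - (a + b) / (1 - b)) * dist u (T u) := by
  have hb₁ : b < 1 := by linarith
  have hr₀ : 0 ≤ (a + b) / (1 - b) := div_nonneg (by linarith) (by linarith)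
  have hr₁ : (a + b) / (1 - b) < 1 := (div_lt_one (by linarith)).2 (by linarith)
  refine ⟨hr₁, fun u => ?_⟩
  obtain ⟨z, hz, hest⟩ := exists_tendsto_iterate_of_dist_apply_le hr₀ hr₁
    (dist_apply_apply_le_of_perturbed_contraction hb₁ hKzero hcontr) u
  exact ⟨z, hz, (isFixedPt_of_tendsto_iterate_of_perturbed_contraction hb₁ hKlim hcontr hz).symm,
    hest⟩

/-- **Theorem 5 with the error estimate (4.3).** Let `(X,d)` be complete and
`T : X → X`. Suppose there are `a, b ≥ 0` with `a + 2b < 1`, and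
`K : [0,∞) → [0,∞)` with `K(0) = 0` and `K(t) → 0` as `t → 0` (within `[0,∞)`),
such that `d(Tx,Ty) ≤ a·d(x,y) + b·[d(x,Tx) + d(y,Ty)] + K(d(Tx,y))` for all
`x,y`. Put `λ := (a+b)/(1−b)`; then `λ < 1`, and for every `u` the orbit
`(Tⁿu)` converges to a fixed point `T^∞u` of `T`, with
`d(Tⁿu, T^∞u) ≤ [λⁿ/(1−λ)]·d(u, Tu)` for all `n`. -/
theorem K_perturbed_contraction_error_estimate {X : Type*} [MetricSpace X]
    [CompleteSpace X] (T : X → X) (a b : ℝ) (K : ℝ → ℝ)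
    (ha : 0 ≤ a) (hb : 0 ≤ b) (hK0 : ∀ t, 0 ≤ t → 0 ≤ K t)
    (hab : a + 2 * b < 1) (hKzero : K 0 = 0)
    (hKlim : Tendsto K (𝓝[≥] (0 : ℝ)) (𝓝 0))
    (hcontr : ∀ x y : X, dist (T x) (T y) ≤ a * dist x y
      + b * (dist x (T x) + dist y (T y)) + K (dist (T x) y)) :
    (a + b) / (1 - b) < 1 ∧
    ∀ u : X, ∃ z : X,
      Tendsto (fun n : ℕ => T^[n] u) atTop (𝓝 z) ∧ z = T z ∧
      ∀ n : ℕ, dist (T^[n] u) z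
        ≤ ((a + b) / (1 - b)) ^ n / (1 - (a + b) / (1 - b)) * dist u (T u) :=
  K_perturbed_contraction_error_estimate_general T a b K ha hb hab hKzero hKlim hcontr
end
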